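/- arXiv:2602.07128 — 3 statements merged into one kernel-verified Lean document; each statement's English description precedes it below -/
import Mathlib

section
/- For every constant C > 2 there exist C' > 0 and ρ₀ > 0 (depending only on C and R₀) with the following property. Let R₀ > 0, 0 < ρ < ρ₀, and let F ⊆ cl(B(0,R₀)) be a closed set such that (i) every point of B(0,R₀) lies within distance 3Cρ of F, and (ii) for every z ∈ F and every 0 < r < ρ the circle {x ∈ ℝ² : |x − z| = r} intersects F. Then for every f ∈ C_c^∞(B(0,R₀) \ F) one has ∫ f(x)² dx ≤ C' ρ² ∫ |∇f(x)|² dx. -/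
set_option maxHeartbeats 2000000



open MeasureTheory Metric Real

noncomputable section

abbrev E2 : Type := EuclideanSpace ℝ (Fin 2)

/-- The Euclidean Laplacian of a real-valued function on `ℝ²`. -/
noncomputable def lap (f : E2 → ℝ) (x : E2) : ℝ :=
  ∑ i : Fin 2, fderiv ℝ (fun y => fderiv ℝ f y (EuclideanSpace.single i 1)) x
    (EuclideanSpace.single i 1)

/-- `u` is a weak solution of `(-h²Δ + V - E)u = 0` on `Ω`. -/
def IsWeakSol (Ω : Set E2) (h : ℝ) (V : E2 → ℝ) (En : ℝ) (u : E2 → ℝ) : Prop :=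
  ∀ φ : E2 → ℝ, ContDiff ℝ (⊤ : ℕ∞) φ → HasCompactSupport φ → tsupport φ ⊆ Ω →
    ∫ x in Ω, u x * (-(h ^ 2) * lap φ x + (V x - En) * φ x) = 0


section PoincareHelpers
open intervalIntegral Complex Set



/-- Cauchy-Schwarz on an interval for continuous functions. -/
lemma cs_interval {h : ℝ → ℝ} (hc : Continuous h) {a b : ℝ} (hab : a ≤ b) :
    (∫ t in a..b, |h t|) ^ 2 ≤ (b - a) * ∫ t in a..b, h t ^ 2 := by
  rcases eq_or_lt_of_le hab with rfl | hlt
  · simp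
  have hL : 0 < b - a := by linarith
  set m : ℝ := ∫ t in a..b, |h t| with hm
  have hint : IntervalIntegrable h volume a b := hc.intervalIntegrable a b
  have hint1 : IntervalIntegrable (fun t => |h t|) volume a b := hc.abs.intervalIntegrable a b
  have hint2 : IntervalIntegrable (fun t => h t ^ 2) volume a b := (hc.pow 2).intervalIntegrable a b
  have key : 0 ≤ ∫ t in a..b, (|h t| - m / (b - a)) ^ 2 := by
    apply intervalIntegral.integral_nonneg hab
    intro t _; positivity
  have expand : ∫ t in a..b, (|h t| - m / (b - a)) ^ 2
      = (∫ t in a..b, h t ^ 2) - m ^ 2 / (b - a) := by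
    have : ∀ t, (|h t| - m / (b - a)) ^ 2
        = h t ^ 2 - (2 * (m / (b - a))) * |h t| + (m / (b-a))^2 := by
      intro t; rw [sub_sq, _root_.sq_abs]; ring
    simp_rw [this]
    rw [intervalIntegral.integral_add, intervalIntegral.integral_sub hint2
      (hint1.const_mul _), intervalIntegral.integral_const_mul, intervalIntegral.integral_const]
    · rw [← hm]
      have hne : b - a ≠ 0 := hL.ne'
      rw [smul_eq_mul]
      have e1 : (b - a) * (m / (b - a)) ^ 2 = m ^ 2 / (b - a) := by field_simp
      linear_combination e1
    · exact hint2.sub (hint1.const_mul _)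
    · exact intervalIntegrable_const
  rw [expand] at key
  have : m ^ 2 / (b-a) ≤ ∫ t in a..b, h t ^ 2 := by linarith
  calc m ^ 2 = (m ^ 2 / (b-a)) * (b-a) := by field_simp
  _ ≤ (∫ t in a..b, h t ^ 2) * (b-a) := by
      apply mul_le_mul_of_nonneg_right this hL.le
  _ = (b-a) * ∫ t in a..b, h t ^ 2 := mul_comm _ _


lemma hasDerivAt_circle (t : ℂ) (s : ℝ) (θ : ℝ) :
    HasDerivAt (fun φ : ℝ => t + ↑s * Complex.exp (↑φ * Complex.I))
      (↑s * Complex.exp (↑θ * Complex.I) * Complex.I) θ := by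
  have h1 : HasDerivAt (fun w : ℂ => Complex.exp (w * Complex.I))
      (Complex.exp (↑θ * Complex.I) * Complex.I) (↑θ : ℂ) := by
    simpa [Function.comp_def] using (Complex.hasDerivAt_exp ((θ:ℂ) * Complex.I)).comp (θ:ℂ)
      ((hasDerivAt_id (θ:ℂ)).mul_const Complex.I)
  have h2 : HasDerivAt (fun φ : ℝ => Complex.exp (↑φ * Complex.I))
      (Complex.exp (↑θ * Complex.I) * Complex.I) θ := h1.comp_ofReal
  simpa [mul_assoc] using (h2.const_mul (s:ℂ)).const_add t

lemma norm_fderiv_apply_le {g : ℂ → ℝ} (y v : ℂ) :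
    |fderiv ℝ g y v| ≤ ‖fderiv ℝ g y‖ * ‖v‖ := (fderiv ℝ g y).le_opNorm v

lemma continuous_N {g : ℂ → ℝ} (hg : ContDiff ℝ (⊤:ℕ∞) g) :
    Continuous fun y => ‖fderiv ℝ g y‖ :=
  (hg.continuous_fderiv (by simp)).norm

/-- FTC bound along a circle of radius `s` around `t`, given a zero on the circle. -/
lemma circle_bound {g : ℂ → ℝ} (hg : ContDiff ℝ (⊤:ℕ∞) g) (t : ℂ) {s : ℝ} (hs : 0 < s)
    {x0 x : ℂ} (h0 : dist x0 t = s) (hx : dist x t = s) (hg0 : g x0 = 0) :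
    g x ^ 2 ≤ (2*π) * s^2 *
      ∫ φ in (-π)..π, ‖fderiv ℝ g (t + ↑s * Complex.exp (↑φ * Complex.I))‖^2 := by
  set c : ℝ → ℂ := fun φ => t + ↑s * Complex.exp (↑φ * Complex.I) with hc
  set N : ℂ → ℝ := fun y => ‖fderiv ℝ g y‖ with hN
  have hNc : Continuous N := continuous_N hg
  have hccont : Continuous c := by
    apply continuous_const.add
    exact continuous_const.mul (Complex.continuous_exp.comp (Complex.continuous_ofReal.mul
      continuous_const))
  -- angles
  have habs0 : ‖x0 - t‖ = s := by rwa [← Complex.dist_eq]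
  have habs1 : ‖x - t‖ = s := by rwa [← Complex.dist_eq]
  set θ₀ : ℝ := (x0 - t).arg with hθ₀
  set θ' : ℝ := (x - t).arg with hθ'
  have hc0 : c θ₀ = x0 := by
    rw [hc]; simp only
    rw [← habs0, Complex.norm_mul_exp_arg_mul_I (x0 - t)]; ring
  have hcper : ∀ φ : ℝ, c (φ + 2*π) = c φ := by
    intro φ
    rw [hc]; simp only
    congr 1
    push_cast
    rw [add_mul, Complex.exp_add]
    norm_num [Complex.exp_two_pi_mul_I]
  set θ₁ : ℝ := if θ₀ ≤ θ' then θ' else θ' + 2*π with hθ₁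
  have harg0 : -π < θ₀ := Complex.neg_pi_lt_arg _
  have harg0' : θ₀ ≤ π := Complex.arg_le_pi _
  have harg1 : -π < θ' := Complex.neg_pi_lt_arg _
  have harg1' : θ' ≤ π := Complex.arg_le_pi _
  have hpi : (0:ℝ) < π := Real.pi_pos
  have h01 : θ₀ ≤ θ₁ := by
    rw [hθ₁]; split_ifs with h
    · exact h
    · nlinarith
  have h12 : θ₁ ≤ θ₀ + 2*π := by
    rw [hθ₁]; split_ifs with h
    · nlinarith
    · nlinarith [le_of_not_ge h]
  have hc1 : c θ₁ = x := by
    have hbase : c θ' = x := by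
      rw [hc]; simp only
      rw [← habs1, Complex.norm_mul_exp_arg_mul_I (x - t)]; ring
    rw [hθ₁]; split_ifs with h
    · exact hbase
    · rw [hcper θ']; exact hbase
  -- derivative along the circle
  set G' : ℝ → ℝ := fun φ => fderiv ℝ g (c φ) (↑s * Complex.exp (↑φ * Complex.I) * Complex.I)
    with hG'
  have hderiv : ∀ φ : ℝ, HasDerivAt (fun ψ => g (c ψ)) (G' φ) φ := by
    intro φ
    exact ((hg.differentiable (by simp)) (c φ)).hasFDerivAt.comp_hasDerivAt φ
      (hasDerivAt_circle t s φ)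
  have hG'cont : Continuous G' := by
    apply Continuous.clm_apply ((hg.continuous_fderiv (by simp)).comp hccont)
    exact (continuous_const.mul (Complex.continuous_exp.comp
      (Complex.continuous_ofReal.mul continuous_const))).mul continuous_const
  have hG'bound : ∀ φ, |G' φ| ≤ s * N (c φ) := by
    intro φ
    calc |G' φ| ≤ ‖fderiv ℝ g (c φ)‖ * ‖↑s * Complex.exp (↑φ * Complex.I) * Complex.I‖ :=
          (fderiv ℝ g (c φ)).le_opNorm _
    _ = s * N (c φ) := by
        have hv : ‖(↑s * Complex.exp (↑φ * Complex.I) * Complex.I : ℂ)‖ = s := by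
          simp [Complex.norm_exp, abs_of_pos hs]
        rw [hv]; rw [mul_comm]
  -- FTC
  have hftc : g x = ∫ φ in θ₀..θ₁, G' φ := by
    have := intervalIntegral.integral_eq_sub_of_hasDerivAt (f := fun ψ => g (c ψ)) (f' := G')
      (a := θ₀) (b := θ₁) (fun φ _ => hderiv φ) (hG'cont.intervalIntegrable _ _)
    rw [this]
    show g x = g (c θ₁) - g (c θ₀)
    rw [hc1, hc0, hg0, sub_zero]
  have habs : |g x| ≤ ∫ φ in θ₀..(θ₀+2*π), |G' φ| := by
    rw [hftc]
    calc |∫ φ in θ₀..θ₁, G' φ| ≤ ∫ φ in θ₀..θ₁, |G' φ| :=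
          intervalIntegral.abs_integral_le_integral_abs h01
    _ ≤ ∫ φ in θ₀..(θ₀+2*π), |G' φ| := by
        apply intervalIntegral.integral_mono_interval le_rfl h01 h12
        · filter_upwards with φ using abs_nonneg _
        · exact hG'cont.abs.intervalIntegrable _ _
  have hsq : g x ^ 2 ≤ (2*π) * ∫ φ in θ₀..(θ₀+2*π), (G' φ)^2 := by
    have h1 : g x ^2 ≤ (∫ φ in θ₀..(θ₀+2*π), |G' φ|) ^ 2 := by
      rw [← _root_.sq_abs (g x)]
      apply pow_le_pow_left₀ (abs_nonneg _) habs
    have h2 := cs_interval (h := G') hG'cont (a := θ₀) (b := θ₀ + 2*π) (by nlinarith)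
    simp only [add_sub_cancel_left] at h2
    exact h1.trans h2
  have hmono : ∫ φ in θ₀..(θ₀+2*π), (G' φ)^2 ≤ s^2 * ∫ φ in θ₀..(θ₀+2*π), (N (c φ))^2 := by
    rw [← intervalIntegral.integral_const_mul]
    apply intervalIntegral.integral_mono_on (by nlinarith)
    · exact (hG'cont.pow 2).intervalIntegrable _ _
    · exact (continuous_const.mul ((hNc.comp hccont).pow 2)).intervalIntegrable _ _
    · intro φ _
      have := hG'bound φ
      have h0 : (G' φ)^2 ≤ (s * N (c φ))^2 := by
        rw [← _root_.sq_abs (G' φ)]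
        apply pow_le_pow_left₀ (abs_nonneg _) this
      nlinarith [this]
  have hper : ∫ φ in θ₀..(θ₀+2*π), (N (c φ))^2 = ∫ φ in (-π)..π, (N (c φ))^2 := by
    have hp : Function.Periodic (fun φ => (N (c φ))^2) (2*π) := by
      intro φ; simp [hcper φ]
    rw [hp.intervalIntegral_add_eq θ₀ (-π), show -π + 2*π = π by ring]
  calc g x ^2 ≤ (2*π) * ∫ φ in θ₀..(θ₀+2*π), (G' φ)^2 := hsq
  _ ≤ (2*π) * (s^2 * ∫ φ in θ₀..(θ₀+2*π), (N (c φ))^2) := by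
      apply mul_le_mul_of_nonneg_left hmono (by positivity)
  _ = (2*π) * s^2 * ∫ φ in (-π)..π, (N (c φ))^2 := by rw [hper]; ring

lemma hasDerivAt_ray (t : ℂ) (θ : ℝ) (u : ℝ) :
    HasDerivAt (fun v : ℝ => t + ↑v * Complex.exp (↑θ * Complex.I))
      (Complex.exp (↑θ * Complex.I)) u := by
  have h1 : HasDerivAt (fun v : ℝ => (v:ℂ)) 1 u := by
    exact Complex.ofRealCLM.hasDerivAt (x := u)
  simpa using (h1.mul_const (Complex.exp (↑θ * Complex.I))).const_add t

/-- FTC bound along a ray. -/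
lemma radial_bound {g : ℂ → ℝ} (hg : ContDiff ℝ (⊤:ℕ∞) g) (t : ℂ) (θ : ℝ) {a b r r₀ : ℝ}
    (hab : a ≤ b) (h1 : a ≤ r₀) (h2 : r₀ ≤ b) (h3 : a ≤ r) (h4 : r ≤ b) :
    g (t + ↑r * Complex.exp (↑θ * Complex.I)) ^ 2
      ≤ 2 * g (t + ↑r₀ * Complex.exp (↑θ * Complex.I)) ^ 2
        + 2 * (b - a) * ∫ s in a..b, ‖fderiv ℝ g (t + ↑s * Complex.exp (↑θ * Complex.I))‖ ^ 2 := by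
  set e : ℂ := Complex.exp (↑θ * Complex.I) with he
  have hne : ‖e‖ = 1 := by simp [he, Complex.norm_exp]
  set ℓ : ℝ → ℂ := fun u => t + ↑u * e with hℓ
  set N : ℂ → ℝ := fun y => ‖fderiv ℝ g y‖ with hN
  have hNc : Continuous N := (hg.continuous_fderiv (by simp)).norm
  have hℓc : Continuous ℓ := by
    exact continuous_const.add ((Complex.continuous_ofReal).mul continuous_const)
  set G' : ℝ → ℝ := fun u => fderiv ℝ g (ℓ u) e with hG'
  have hderiv : ∀ u : ℝ, HasDerivAt (fun v => g (ℓ v)) (G' u) u := fun u =>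
    ((hg.differentiable (by simp)) (ℓ u)).hasFDerivAt.comp_hasDerivAt u
      (hasDerivAt_ray t θ u)
  have hG'cont : Continuous G' := by
    exact Continuous.clm_apply ((hg.continuous_fderiv (by simp)).comp hℓc)
      continuous_const
  have hG'bound : ∀ u, |G' u| ≤ N (ℓ u) := by
    intro u
    calc |G' u| ≤ ‖fderiv ℝ g (ℓ u)‖ * ‖e‖ := (fderiv ℝ g (ℓ u)).le_opNorm _
    _ = N (ℓ u) := by rw [hne, mul_one]
  have hftc : g (ℓ r) - g (ℓ r₀) = ∫ u in r₀..r, G' u := by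
    rw [intervalIntegral.integral_eq_sub_of_hasDerivAt (f := fun v => g (ℓ v)) (f' := G')
      (a := r₀) (b := r) (fun u _ => hderiv u) (hG'cont.intervalIntegrable _ _)]
  have hint : ∀ {u v : ℝ}, a ≤ u → u ≤ v → v ≤ b →
      ∫ w in u..v, |G' w| ≤ ∫ w in a..b, |G' w| := by
    intro u v hu huv hv
    apply intervalIntegral.integral_mono_interval hu huv hv
    · filter_upwards with w using abs_nonneg _
    · exact hG'cont.abs.intervalIntegrable _ _
  have habs : |g (ℓ r) - g (ℓ r₀)| ≤ ∫ w in a..b, |G' w| := by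
    rcases le_total r₀ r with h | h
    · rw [hftc]
      exact (intervalIntegral.abs_integral_le_integral_abs h).trans (hint h1 h h4)
    · have hsymm : ∫ u in r₀..r, G' u = -∫ u in r..r₀, G' u :=
        intervalIntegral.integral_symm r r₀
      rw [hftc, hsymm, abs_neg]
      exact (intervalIntegral.abs_integral_le_integral_abs h).trans (hint h3 h h2)
  have hcs : (∫ w in a..b, |G' w|) ^ 2 ≤ (b - a) * ∫ w in a..b, (G' w) ^ 2 :=
    cs_interval hG'cont hab
  have hmono : ∫ w in a..b, (G' w) ^ 2 ≤ ∫ w in a..b, (N (ℓ w)) ^ 2 := by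
    apply intervalIntegral.integral_mono_on hab
    · exact (hG'cont.pow 2).intervalIntegrable _ _
    · exact ((hNc.comp hℓc).pow 2).intervalIntegrable _ _
    · intro w _
      have h := hG'bound w
      nlinarith [abs_nonneg (G' w), _root_.sq_abs (G' w)]
  have hd2 : (g (ℓ r) - g (ℓ r₀)) ^ 2 ≤ (b - a) * ∫ w in a..b, (N (ℓ w)) ^ 2 := by
    have h0 : (g (ℓ r) - g (ℓ r₀))^2 ≤ (∫ w in a..b, |G' w|) ^ 2 := by
      nlinarith [habs, abs_nonneg (g (ℓ r) - g (ℓ r₀)),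
        _root_.sq_abs (g (ℓ r) - g (ℓ r₀))]
    apply h0.trans (hcs.trans ?_)
    apply mul_le_mul_of_nonneg_left hmono (by linarith)
  have goal' : g (ℓ r) ^ 2 ≤ 2 * g (ℓ r₀) ^ 2 + 2 * (b - a) * ∫ w in a..b, (N (ℓ w)) ^ 2 := by
    nlinarith [hd2, sq_nonneg (g (ℓ r) - 2 * g (ℓ r₀))]
  exact goal'



lemma polar_symm_eq (q : ℝ × ℝ) :
    Complex.polarCoord.symm q = ↑q.1 * Complex.exp (↑q.2 * Complex.I) := by
  rw [Complex.polarCoord_symm_apply, Complex.exp_mul_I]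
  push_cast
  ring

lemma integrableOn_box {F : ℝ × ℝ → ℝ} (hF : Continuous F) {a b c d : ℝ} :
    IntegrableOn F (Set.Ioo a b ×ˢ Set.Ioo c d) := by
  apply (hF.continuousOn.integrableOn_compact (isCompact_Icc.prod isCompact_Icc)).mono_set
  exact Set.prod_mono Set.Ioo_subset_Icc_self Set.Ioo_subset_Icc_self

lemma integrableOn_ball_of_continuous {h : ℂ → ℝ} (hm : Continuous h) (t : ℂ) (R : ℝ) :
    IntegrableOn h (ball t R) := by
  apply (hm.continuousOn.integrableOn_compact (isCompact_closedBall t R)).mono_set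
  exact ball_subset_closedBall

lemma polar_ball {h : ℂ → ℝ} (hm : Continuous h) (t : ℂ) {R : ℝ} (hR : 0 < R) :
    ∫ x in ball t R, h x
      = ∫ p in Set.Ioo (0:ℝ) R ×ˢ Set.Ioo (-π) π,
          p.1 * h (t + ↑p.1 * Complex.exp (↑p.2 * Complex.I)) := by
  have key := Complex.integral_comp_polarCoord_symm
    (fun x => Set.indicator (ball (0:ℂ) R) (fun y => h (t + y)) x)
  have hfun : (fun x => Set.indicator (ball (0:ℂ) R) (fun y => h (t + y)) x)
      = fun x => Set.indicator (ball t R) h (t + x) := by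
    ext y
    have hmem : t + y ∈ ball t R ↔ y ∈ ball (0:ℂ) R := by
      simp [mem_ball, dist_eq_norm]
    by_cases hy : y ∈ ball (0:ℂ) R
    · rw [Set.indicator_of_mem hy, Set.indicator_of_mem (hmem.mpr hy)]
    · rw [Set.indicator_of_notMem hy,
        Set.indicator_of_notMem (fun hc => hy (hmem.mp hc))]
  have h1 : ∫ x in ball t R, h x
      = ∫ x, Set.indicator (ball (0:ℂ) R) (fun y => h (t + y)) x := by
    rw [hfun, MeasureTheory.integral_add_left_eq_self _ t,
      MeasureTheory.integral_indicator measurableSet_ball]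
  have h2 : (∫ p in polarCoord.target,
        p.1 • Set.indicator (ball (0:ℂ) R) (fun y => h (t + y)) (Complex.polarCoord.symm p))
      = ∫ p in Set.Ioo (0:ℝ) R ×ˢ Set.Ioo (-π) π,
          p.1 * h (t + ↑p.1 * Complex.exp (↑p.2 * Complex.I)) := by
    have hsub : (Set.Ioo (0:ℝ) R ×ˢ Set.Ioo (-π) π) ⊆ polarCoord.target := by
      rw [polarCoord_target]
      exact Set.prod_mono Set.Ioo_subset_Ioi_self (le_refl _)
    have hcong : ∀ p ∈ polarCoord.target,
        p.1 • Set.indicator (ball (0:ℂ) R) (fun y => h (t + y)) (Complex.polarCoord.symm p)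
        = Set.indicator (Set.Ioo (0:ℝ) R ×ˢ Set.Ioo (-π) π)
            (fun q => q.1 * h (t + ↑q.1 * Complex.exp (↑q.2 * Complex.I))) p := by
      intro p hp
      rw [polarCoord_target] at hp
      obtain ⟨hp1, hp2⟩ := hp
      simp only [Set.mem_Ioi] at hp1
      have habs : ‖Complex.polarCoord.symm p‖ = p.1 := by
        rw [Complex.norm_polarCoord_symm, abs_of_pos hp1]
      have hmem : Complex.polarCoord.symm p ∈ ball (0:ℂ) R ↔ p.1 < R := by
        rw [mem_ball, Complex.dist_eq, sub_zero, habs]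
      by_cases hpR : p.1 < R
      · rw [Set.indicator_of_mem (hmem.mpr hpR),
          Set.indicator_of_mem (by exact ⟨⟨hp1, hpR⟩, hp2⟩), polar_symm_eq]
        simp [smul_eq_mul]
      · rw [Set.indicator_of_notMem (fun hc => hpR (hmem.mp hc)),
          Set.indicator_of_notMem (by
            intro hc
            exact hpR hc.1.2)]
        simp
    rw [MeasureTheory.setIntegral_congr_fun (by
        rw [polarCoord_target]
        exact measurableSet_Ioi.prod measurableSet_Ioo) hcong]
    rw [MeasureTheory.setIntegral_indicator (by
        exact (measurableSet_Ioo.prod measurableSet_Ioo))]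
    congr 1
    rw [Set.inter_eq_self_of_subset_right hsub]
  rw [h1, ← key, h2]

lemma polar_ball_lintegral {h : ℂ → ℝ} (hm : Continuous h) (hpos : ∀ x, 0 ≤ h x) (t : ℂ)
    {R : ℝ} (hR : 0 < R) :
    ∫⁻ x in ball t R, ENNReal.ofReal (h x)
      = ∫⁻ p in Set.Ioo (0:ℝ) R ×ˢ Set.Ioo (-π) π,
          ENNReal.ofReal (p.1 * h (t + ↑p.1 * Complex.exp (↑p.2 * Complex.I))) := by
  have hi : IntegrableOn h (ball t R) := integrableOn_ball_of_continuous hm t R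
  have hcont2 : Continuous fun p : ℝ × ℝ =>
      p.1 * h (t + ↑p.1 * Complex.exp (↑p.2 * Complex.I)) := by
    apply continuous_fst.mul
    apply hm.comp
    apply continuous_const.add
    exact (Complex.continuous_ofReal.comp continuous_fst).mul
      (Complex.continuous_exp.comp ((Complex.continuous_ofReal.comp continuous_snd).mul
        continuous_const))
  have hi2 : IntegrableOn (fun p : ℝ × ℝ =>
      p.1 * h (t + ↑p.1 * Complex.exp (↑p.2 * Complex.I)))
      (Set.Ioo (0:ℝ) R ×ˢ Set.Ioo (-π) π) := integrableOn_box hcont2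
  rw [← MeasureTheory.ofReal_integral_eq_lintegral_ofReal hi
    (by filter_upwards with x using hpos x)]
  rw [← MeasureTheory.ofReal_integral_eq_lintegral_ofReal hi2 ?_]
  · rw [polar_ball hm t hR]
  · rw [Filter.EventuallyLE, ae_restrict_iff' (measurableSet_Ioo.prod measurableSet_Ioo)]
    filter_upwards with p hp
    exact mul_nonneg (le_of_lt hp.1.1) (hpos _)



lemma lint_box_fst {H : ℝ × ℝ → ENNReal} (hH : Measurable H) {s1 s2 : Set ℝ} :
    ∫⁻ p in s1 ×ˢ s2, H p = ∫⁻ r in s1, ∫⁻ θ in s2, H (r, θ) := by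
  rw [Measure.volume_eq_prod, ← Measure.prod_restrict,
    MeasureTheory.lintegral_prod _ hH.aemeasurable]

lemma lint_box_snd {H : ℝ × ℝ → ENNReal} (hH : Measurable H) {s1 s2 : Set ℝ} :
    ∫⁻ p in s1 ×ˢ s2, H p = ∫⁻ θ in s2, ∫⁻ r in s1, H (r, θ) := by
  rw [Measure.volume_eq_prod, ← Measure.prod_restrict,
    MeasureTheory.lintegral_prod_symm _ hH.aemeasurable]

lemma ofReal_intervalIntegral_eq_lintegral_Ioo {F : ℝ → ℝ} (hF : Continuous F) {a b : ℝ}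
    (hab : a ≤ b) (hpos : ∀ x, 0 ≤ F x) :
    ENNReal.ofReal (∫ x in a..b, F x) = ∫⁻ x in Set.Ioo a b, ENNReal.ofReal (F x) := by
  rw [intervalIntegral.integral_of_le hab]
  have hi : IntegrableOn F (Set.Ioc a b) :=
    (hF.continuousOn.integrableOn_compact isCompact_Icc).mono_set Set.Ioc_subset_Icc_self
  rw [MeasureTheory.ofReal_integral_eq_lintegral_ofReal hi
    (by filter_upwards with x using hpos x)]
  exact (setLIntegral_congr Ioo_ae_eq_Ioc).symm

lemma dist_polar_pt (t : ℂ) (r θ : ℝ) (hr : 0 ≤ r) :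
    dist (t + ↑r * Complex.exp (↑θ * Complex.I)) t = r := by
  rw [Complex.dist_eq]
  have : t + ↑r * Complex.exp (↑θ * Complex.I) - t = ↑r * Complex.exp (↑θ * Complex.I) := by ring
  rw [this, norm_mul, Complex.norm_exp]
  simp [abs_of_nonneg hr]

lemma local_poincare {g : ℂ → ℝ} (hg : ContDiff ℝ (⊤:ℕ∞) g) (t : ℂ) {ρ Λ : ℝ}
    (hρ : 0 < ρ) (hΛ : 1 < Λ)
    (hzero : ∀ r : ℝ, 0 < r → r < ρ → ∃ x : ℂ, dist x t = r ∧ g x = 0) :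
    ∫⁻ x in ball t (Λ*ρ), ENNReal.ofReal (g x ^ 2)
      ≤ ENNReal.ofReal ((4*π^2 + (16*π^2 + 4*Λ)*Λ^2) * ρ^2) *
        ∫⁻ x in ball t (Λ*ρ), ENNReal.ofReal (‖fderiv ℝ g x‖ ^ 2) := by
  have hπ := Real.pi_pos
  have hΛ0 : (0:ℝ) < Λ := by linarith
  have hΛρ : 0 < Λ * ρ := by positivity
  have hρΛρ : ρ < Λ * ρ := by nlinarith
  have hgc : Continuous g := hg.continuous
  have hNc : Continuous (fun y => ‖fderiv ℝ g y‖) :=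
    (hg.continuous_fderiv (by simp)).norm
  have hPcont : Continuous (fun p : ℝ × ℝ => t + ↑p.1 * Complex.exp (↑p.2 * Complex.I)) := by
    apply continuous_const.add
    exact (Complex.continuous_ofReal.comp continuous_fst).mul
      (Complex.continuous_exp.comp ((Complex.continuous_ofReal.comp continuous_snd).mul
        continuous_const))
  have hPcont1 : ∀ θ : ℝ, Continuous (fun r : ℝ => t + ↑r * Complex.exp (↑θ * Complex.I)) :=
    fun θ => (hPcont.comp (continuous_id.prodMk continuous_const))
  have hPcont2 : ∀ r : ℝ, Continuous (fun θ : ℝ => t + ↑r * Complex.exp (↑θ * Complex.I)) :=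
    fun r => (hPcont.comp (continuous_const.prodMk continuous_id))
  have hG2c : Continuous (fun p : ℝ × ℝ => ENNReal.ofReal (p.1 * g (t + ↑p.1 * Complex.exp (↑p.2 * Complex.I)) ^ 2)) :=
    ENNReal.continuous_ofReal.comp (continuous_fst.mul ((hgc.comp hPcont).pow 2))
  have hN2c : Continuous (fun p : ℝ × ℝ => ENNReal.ofReal (p.1 * ‖fderiv ℝ g (t + ↑p.1 * Complex.exp (↑p.2 * Complex.I))‖ ^ 2)) :=
    ENNReal.continuous_ofReal.comp (continuous_fst.mul ((hNc.comp hPcont).pow 2))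
  set Θ : Set ℝ := Set.Ioo (-π) π with hΘ
  have hmΘ : MeasurableSet Θ := measurableSet_Ioo
  have hvolΘ : volume Θ = ENNReal.ofReal (2*π) := by
    rw [hΘ, Real.volume_Ioo]; congr 1; ring
  set AQ : ENNReal := ∫⁻ r in Set.Ioo 0 (Λ*ρ), ∫⁻ θ in Θ,
    ENNReal.ofReal (r * ‖fderiv ℝ g (t + ↑r * Complex.exp (↑θ * Complex.I))‖ ^ 2) with hAQ
  -- circle integral S
  set S : ℝ → ℝ := fun r => ∫ φ in (-π)..π, ‖fderiv ℝ g (t + ↑r * Complex.exp (↑φ * Complex.I))‖ ^ 2 with hS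
  have hScont : Continuous S := by
    apply intervalIntegral.continuous_parametric_intervalIntegral_of_continuous'
    exact (hNc.comp hPcont).pow 2
  have hSnn : ∀ r, 0 ≤ S r :=
    fun r => intervalIntegral.integral_nonneg (by linarith) (fun _ _ => sq_nonneg _)
  -- lintegral of r*S(r) over radius sets is bounded by AQ
  have hkeyS : ∀ s : Set ℝ, MeasurableSet s → s ⊆ Set.Ioo 0 (Λ*ρ) →
      ∫⁻ r in s, ENNReal.ofReal (r * S r) ≤ AQ := by
    intro s hms hsub
    have hcong : ∀ r ∈ s, ENNReal.ofReal (r * S r)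
        = ∫⁻ θ in Θ, ENNReal.ofReal (r * ‖fderiv ℝ g (t + ↑r * Complex.exp (↑θ * Complex.I))‖ ^ 2) := by
      intro r hr
      have hr0 : 0 ≤ r := le_of_lt (hsub hr).1
      have hid : r * S r = ∫ φ in (-π)..π, r * ‖fderiv ℝ g (t + ↑r * Complex.exp (↑φ * Complex.I))‖ ^ 2 := by
        rw [hS]; exact (intervalIntegral.integral_const_mul r _).symm
      rw [hid]
      exact ofReal_intervalIntegral_eq_lintegral_Ioo
        (continuous_const.mul ((hNc.comp (hPcont2 r)).pow 2)) (by linarith)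
        (fun x => mul_nonneg hr0 (sq_nonneg _))
    rw [setLIntegral_congr_fun hms hcong]
    exact lintegral_mono_set hsub
  -- pointwise circle estimate
  have F1 : ∀ r θ : ℝ, 0 < r → r < ρ → g (t + ↑r * Complex.exp (↑θ * Complex.I)) ^ 2 ≤ (2*π) * r^2 * S r := by
    intro r θ h1 h2
    obtain ⟨x0, hx0d, hx0z⟩ := hzero r h1 h2
    exact circle_bound hg t h1 hx0d (dist_polar_pt t r θ h1.le) hx0z
  -- inner θ-lintegral bound from F1, for any 0 < r < ρ, with constant c ≥ 2*π*ρ*... :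
  have hfiber : ∀ r : ℝ, 0 < r → r < ρ →
      (∫⁻ θ in Θ, ENNReal.ofReal (g (t + ↑r * Complex.exp (↑θ * Complex.I)) ^ 2))
        ≤ ENNReal.ofReal (4*π^2*r) * ENNReal.ofReal (r * S r) := by
    intro r h1 h2
    calc ∫⁻ θ in Θ, ENNReal.ofReal (g (t + ↑r * Complex.exp (↑θ * Complex.I)) ^ 2)
        ≤ ∫⁻ _ in Θ, ENNReal.ofReal ((2*π) * r^2 * S r) := by
          apply setLIntegral_mono measurable_const
          intro θ _
          exact ENNReal.ofReal_le_ofReal (F1 r θ h1 h2)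
    _ = ENNReal.ofReal ((2*π) * r^2 * S r) * ENNReal.ofReal (2*π) := by
          rw [setLIntegral_const, hvolΘ]
    _ = ENNReal.ofReal (4*π^2*r) * ENNReal.ofReal (r * S r) := by
          rw [← ENNReal.ofReal_mul (mul_nonneg (by positivity) (hSnn r)),
            ← ENNReal.ofReal_mul (mul_nonneg (by positivity) h1.le)]
          congr 1
          ring
  -- radial functions T, R
  set T : ℝ → ℝ := fun θ => ∫ r in (ρ/2)..ρ, g (t + ↑r * Complex.exp (↑θ * Complex.I)) ^ 2 with hT
  set RR : ℝ → ℝ := fun θ => ∫ s in (ρ/2)..(Λ*ρ), ‖fderiv ℝ g (t + ↑s * Complex.exp (↑θ * Complex.I))‖ ^ 2 with hRR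
  have hTcont : Continuous T := by
    apply intervalIntegral.continuous_parametric_intervalIntegral_of_continuous'
    exact (hgc.comp (hPcont.comp continuous_swap)).pow 2
  have hRRcont : Continuous RR := by
    apply intervalIntegral.continuous_parametric_intervalIntegral_of_continuous'
    exact (hNc.comp (hPcont.comp continuous_swap)).pow 2
  have hTnn : ∀ θ, 0 ≤ T θ :=
    fun θ => intervalIntegral.integral_nonneg (by linarith) (fun _ _ => sq_nonneg _)
  have hRRnn : ∀ θ, 0 ≤ RR θ :=
    fun θ => intervalIntegral.integral_nonneg (by linarith) (fun _ _ => sq_nonneg _)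
  -- pointwise radial estimate
  have F2 : ∀ r θ : ℝ, ρ ≤ r → r ≤ Λ*ρ →
      g (t + ↑r * Complex.exp (↑θ * Complex.I)) ^ 2 ≤ (4/ρ) * T θ + 2*(Λ*ρ) * RR θ := by
    intro r θ h1 h2
    have hr2 : ∀ r₀ ∈ Set.Icc (ρ/2) ρ,
        g (t + ↑r * Complex.exp (↑θ * Complex.I)) ^ 2 ≤ 2 * g (t + ↑r₀ * Complex.exp (↑θ * Complex.I)) ^ 2 + 2*(Λ*ρ) * RR θ := by
      intro r₀ hr₀
      have hb := radial_bound hg t θ (a := ρ/2) (b := Λ*ρ) (r := r) (r₀ := r₀)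
        (by linarith) hr₀.1 (by nlinarith [hr₀.2]) (by linarith) h2
      have hRRb : 2 * (Λ*ρ - ρ/2) * RR θ ≤ 2*(Λ*ρ) * RR θ := by
        nlinarith [hRRnn θ]
      calc g (t + ↑r * Complex.exp (↑θ * Complex.I)) ^ 2 ≤ 2 * g (t + ↑r₀ * Complex.exp (↑θ * Complex.I)) ^ 2 + 2 * (Λ*ρ - ρ/2) * RR θ := hb
      _ ≤ 2 * g (t + ↑r₀ * Complex.exp (↑θ * Complex.I)) ^ 2 + 2*(Λ*ρ) * RR θ := by linarith
    have hcint : IntervalIntegrable (fun r₀ => g (t + ↑r₀ * Complex.exp (↑θ * Complex.I)) ^ 2) volume (ρ/2) ρ :=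
      (((hgc.comp (hPcont1 θ))).pow 2).intervalIntegrable _ _
    have hRHSint : IntervalIntegrable
        (fun r₀ => 2 * g (t + ↑r₀ * Complex.exp (↑θ * Complex.I)) ^ 2 + 2*(Λ*ρ) * RR θ) volume (ρ/2) ρ :=
      ((continuous_const.mul (((hgc.comp (hPcont1 θ))).pow 2)).add
        continuous_const).intervalIntegrable _ _
    have hmono := intervalIntegral.integral_mono_on (show ρ/2 ≤ ρ by linarith)
      (_root_.intervalIntegrable_const (c := g (t + ↑r * Complex.exp (↑θ * Complex.I)) ^ 2)) hRHSint hr2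
    have hLHSval : ∫ _ in (ρ/2)..ρ, g (t + ↑r * Complex.exp (↑θ * Complex.I)) ^ 2 = (ρ - ρ/2) * g (t + ↑r * Complex.exp (↑θ * Complex.I)) ^ 2 := by
      rw [intervalIntegral.integral_const, smul_eq_mul]
    have hRHSval : ∫ r₀ in (ρ/2)..ρ, (2 * g (t + ↑r₀ * Complex.exp (↑θ * Complex.I)) ^ 2 + 2*(Λ*ρ) * RR θ)
        = 2 * T θ + (ρ - ρ/2) * (2*(Λ*ρ) * RR θ) := by
      have hint1 : IntervalIntegrable
          (fun r₀ : ℝ => 2 * g (t + ↑r₀ * Complex.exp (↑θ * Complex.I)) ^ 2) volume (ρ/2) ρ :=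
        (continuous_const.mul ((hgc.comp (hPcont1 θ)).pow 2)).intervalIntegrable _ _
      rw [intervalIntegral.integral_add hint1 (_root_.intervalIntegrable_const),
        intervalIntegral.integral_const_mul, intervalIntegral.integral_const, smul_eq_mul]
    rw [hLHSval, hRHSval] at hmono
    have h2ρ : (0:ℝ) < 2/ρ := by positivity
    have hL : (2/ρ) * ((ρ - ρ/2) * g (t + ↑r * Complex.exp (↑θ * Complex.I)) ^ 2) = g (t + ↑r * Complex.exp (↑θ * Complex.I)) ^ 2 := by
      field_simp; ring
    have hR : (2/ρ) * (2 * T θ + (ρ - ρ/2) * (2*(Λ*ρ) * RR θ))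
        = (4/ρ) * T θ + 2*(Λ*ρ) * RR θ := by
      field_simp; ring
    have := mul_le_mul_of_nonneg_left hmono h2ρ.le
    rw [hL, hR] at this
    exact this
  -- merge helpers for ENNReal constants
  have hofne : ∀ c : ℝ, ENNReal.ofReal c ≠ ⊤ := fun c => ENNReal.ofReal_ne_top
  -- polar representation of the two ball integrals
  have hballG : ∫⁻ x in ball t (Λ*ρ), ENNReal.ofReal (g x ^ 2)
      = ∫⁻ p in Set.Ioo (0:ℝ) (Λ*ρ) ×ˢ Set.Ioo (-π) π,
          ENNReal.ofReal (p.1 * g (t + ↑p.1 * Complex.exp (↑p.2 * Complex.I)) ^ 2) :=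
    polar_ball_lintegral (h := fun x => g x ^ 2) (hgc.pow 2) (fun x => sq_nonneg _) t hΛρ
  have hballN : ∫⁻ x in ball t (Λ*ρ), ENNReal.ofReal (‖fderiv ℝ g x‖ ^ 2)
      = ∫⁻ p in Set.Ioo (0:ℝ) (Λ*ρ) ×ˢ Set.Ioo (-π) π,
          ENNReal.ofReal (p.1 * ‖fderiv ℝ g (t + ↑p.1 * Complex.exp (↑p.2 * Complex.I))‖ ^ 2) :=
    polar_ball_lintegral (h := fun x => ‖fderiv ℝ g x‖ ^ 2) (hNc.pow 2)
      (fun x => sq_nonneg _) t hΛρ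
  have hAQeq : ∫⁻ p in Set.Ioo (0:ℝ) (Λ*ρ) ×ˢ Θ,
      ENNReal.ofReal (p.1 * ‖fderiv ℝ g (t + ↑p.1 * Complex.exp (↑p.2 * Complex.I))‖ ^ 2) = AQ := lint_box_fst hN2c.measurable
  -- split of the product domain
  have hsplit : Set.Ioo (0:ℝ) (Λ*ρ) ×ˢ Θ
      = (Set.Ioo (0:ℝ) ρ ×ˢ Θ) ∪ (Set.Ico ρ (Λ*ρ) ×ˢ Θ) := by
    rw [← Set.union_prod]
    congr 1
    exact (Set.Ioo_union_Ico_eq_Ioo hρ hρΛρ.le).symm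
  have hdisj : Disjoint (Set.Ioo (0:ℝ) ρ ×ˢ Θ) (Set.Ico ρ (Λ*ρ) ×ˢ Θ) := by
    apply Set.Disjoint.set_prod_left
    apply Set.disjoint_left.mpr
    rintro x hx hx'
    exact absurd hx'.1 (not_le.mpr hx.2)
  -- part 1
  have hpart1 : ∫⁻ p in (Set.Ioo (0:ℝ) ρ ×ˢ Θ), ENNReal.ofReal (p.1 * g (t + ↑p.1 * Complex.exp (↑p.2 * Complex.I)) ^ 2)
      ≤ ENNReal.ofReal (4*π^2*ρ^2) * AQ := by
    rw [lint_box_fst hG2c.measurable]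
    have hin : ∀ r ∈ Set.Ioo (0:ℝ) ρ, ∫⁻ θ in Θ, ENNReal.ofReal (r * g (t + ↑r * Complex.exp (↑θ * Complex.I)) ^ 2)
        ≤ ENNReal.ofReal (4*π^2*ρ^2) * ENNReal.ofReal (r * S r) := by
      intro r hr
      have h1 : ∀ θ : ℝ, ENNReal.ofReal (r * g (t + ↑r * Complex.exp (↑θ * Complex.I)) ^ 2)
          = ENNReal.ofReal r * ENNReal.ofReal (g (t + ↑r * Complex.exp (↑θ * Complex.I)) ^ 2) :=
        fun θ => ENNReal.ofReal_mul hr.1.le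
      calc ∫⁻ θ in Θ, ENNReal.ofReal (r * g (t + ↑r * Complex.exp (↑θ * Complex.I)) ^ 2)
          = ∫⁻ θ in Θ, ENNReal.ofReal r * ENNReal.ofReal (g (t + ↑r * Complex.exp (↑θ * Complex.I)) ^ 2) :=
            lintegral_congr (fun θ => h1 θ)
      _ = ENNReal.ofReal r * ∫⁻ θ in Θ, ENNReal.ofReal (g (t + ↑r * Complex.exp (↑θ * Complex.I)) ^ 2) :=
            lintegral_const_mul' _ _ (hofne r)
      _ ≤ ENNReal.ofReal r * (ENNReal.ofReal (4*π^2*r) * ENNReal.ofReal (r * S r)) :=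
            mul_le_mul_right (hfiber r hr.1 hr.2) _
      _ = (ENNReal.ofReal r * ENNReal.ofReal (4*π^2*r)) * ENNReal.ofReal (r * S r) :=
            (mul_assoc _ _ _).symm
      _ ≤ ENNReal.ofReal (4*π^2*ρ^2) * ENNReal.ofReal (r * S r) := by
            apply mul_le_mul_left
            rw [← ENNReal.ofReal_mul hr.1.le]
            apply ENNReal.ofReal_le_ofReal
            have hrsq : r^2 ≤ ρ^2 := by nlinarith [hr.1, hr.2]
            nlinarith [hrsq, sq_nonneg π]
    calc ∫⁻ r in Set.Ioo (0:ℝ) ρ, ∫⁻ θ in Θ, ENNReal.ofReal (r * g (t + ↑r * Complex.exp (↑θ * Complex.I)) ^ 2)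
        ≤ ∫⁻ r in Set.Ioo (0:ℝ) ρ, ENNReal.ofReal (4*π^2*ρ^2) * ENNReal.ofReal (r * S r) := by
          apply setLIntegral_mono
          · exact measurable_const.mul (ENNReal.measurable_ofReal.comp
              (continuous_id.mul hScont).measurable)
          · exact hin
    _ = ENNReal.ofReal (4*π^2*ρ^2) * ∫⁻ r in Set.Ioo (0:ℝ) ρ, ENNReal.ofReal (r * S r) :=
          lintegral_const_mul' _ _ (hofne _)
    _ ≤ ENNReal.ofReal (4*π^2*ρ^2) * AQ := by
          apply mul_le_mul_right
          exact hkeyS _ measurableSet_Ioo (Set.Ioo_subset_Ioo le_rfl hρΛρ.le)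
  -- LT
  have hLT : ∫⁻ θ in Θ, ENNReal.ofReal (T θ) ≤ ENNReal.ofReal (4*π^2*ρ) * AQ := by
    have hconv : ∀ θ : ℝ, ENNReal.ofReal (T θ)
        = ∫⁻ r in Set.Ioo (ρ/2) ρ, ENNReal.ofReal (g (t + ↑r * Complex.exp (↑θ * Complex.I)) ^ 2) := fun θ =>
      ofReal_intervalIntegral_eq_lintegral_Ioo ((hgc.comp (hPcont1 θ)).pow 2)
        (by linarith) (fun x => sq_nonneg _)
    have hmeas : Measurable fun p : ℝ × ℝ => ENNReal.ofReal (g (t + ↑p.1 * Complex.exp (↑p.2 * Complex.I)) ^ 2) :=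
      (ENNReal.continuous_ofReal.comp ((hgc.comp hPcont).pow 2)).measurable
    rw [lintegral_congr hconv, ← lint_box_snd hmeas, lint_box_fst hmeas]
    have hin : ∀ r ∈ Set.Ioo (ρ/2) ρ, ∫⁻ θ in Θ, ENNReal.ofReal (g (t + ↑r * Complex.exp (↑θ * Complex.I)) ^ 2)
        ≤ ENNReal.ofReal (4*π^2*ρ) * ENNReal.ofReal (r * S r) := by
      intro r hr
      have h0 : 0 < r := lt_trans (by positivity) hr.1
      calc ∫⁻ θ in Θ, ENNReal.ofReal (g (t + ↑r * Complex.exp (↑θ * Complex.I)) ^ 2)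
          ≤ ENNReal.ofReal (4*π^2*r) * ENNReal.ofReal (r * S r) := hfiber r h0 hr.2
      _ ≤ ENNReal.ofReal (4*π^2*ρ) * ENNReal.ofReal (r * S r) := by
            apply mul_le_mul_left
            apply ENNReal.ofReal_le_ofReal
            nlinarith [hr.2, hπ]
    calc ∫⁻ r in Set.Ioo (ρ/2) ρ, ∫⁻ θ in Θ, ENNReal.ofReal (g (t + ↑r * Complex.exp (↑θ * Complex.I)) ^ 2)
        ≤ ∫⁻ r in Set.Ioo (ρ/2) ρ, ENNReal.ofReal (4*π^2*ρ) * ENNReal.ofReal (r * S r) := by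
          apply setLIntegral_mono
          · exact measurable_const.mul (ENNReal.measurable_ofReal.comp
              (continuous_id.mul hScont).measurable)
          · exact hin
    _ = ENNReal.ofReal (4*π^2*ρ) * ∫⁻ r in Set.Ioo (ρ/2) ρ, ENNReal.ofReal (r * S r) :=
          lintegral_const_mul' _ _ (hofne _)
    _ ≤ ENNReal.ofReal (4*π^2*ρ) * AQ := by
          apply mul_le_mul_right
          exact hkeyS _ measurableSet_Ioo (Set.Ioo_subset_Ioo (by linarith) (by linarith))
  -- LR
  have hLR : ∫⁻ θ in Θ, ENNReal.ofReal (RR θ) ≤ ENNReal.ofReal (2/ρ) * AQ := by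
    have hconv : ∀ θ : ℝ, ENNReal.ofReal (RR θ)
        = ∫⁻ r in Set.Ioo (ρ/2) (Λ*ρ), ENNReal.ofReal (‖fderiv ℝ g (t + ↑r * Complex.exp (↑θ * Complex.I))‖ ^ 2) := fun θ =>
      ofReal_intervalIntegral_eq_lintegral_Ioo ((hNc.comp (hPcont1 θ)).pow 2)
        (by nlinarith) (fun x => sq_nonneg _)
    have hmeas : Measurable fun p : ℝ × ℝ => ENNReal.ofReal (‖fderiv ℝ g (t + ↑p.1 * Complex.exp (↑p.2 * Complex.I))‖ ^ 2) :=
      (ENNReal.continuous_ofReal.comp ((hNc.comp hPcont).pow 2)).measurable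
    rw [lintegral_congr hconv, ← lint_box_snd hmeas, lint_box_fst hmeas]
    have hin : ∀ r ∈ Set.Ioo (ρ/2) (Λ*ρ), ∫⁻ θ in Θ, ENNReal.ofReal (‖fderiv ℝ g (t + ↑r * Complex.exp (↑θ * Complex.I))‖ ^ 2)
        ≤ ENNReal.ofReal (2/ρ) * ∫⁻ θ in Θ, ENNReal.ofReal (r * ‖fderiv ℝ g (t + ↑r * Complex.exp (↑θ * Complex.I))‖ ^ 2) := by
      intro r hr
      rw [← lintegral_const_mul' _ _ (hofne _)]
      apply setLIntegral_mono
      · exact (measurable_const.mul (ENNReal.measurable_ofReal.comp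
          (continuous_const.mul ((hNc.comp (hPcont2 r)).pow 2)).measurable))
      · intro θ _
        rw [← ENNReal.ofReal_mul (by positivity)]
        apply ENNReal.ofReal_le_ofReal
        have h1 : 1 ≤ (2/ρ) * r := by
          rw [div_mul_eq_mul_div, le_div_iff₀ hρ]
          nlinarith [hr.1]
        nlinarith [sq_nonneg (‖fderiv ℝ g (t + ↑r * Complex.exp (↑θ * Complex.I))‖), h1]
    calc ∫⁻ r in Set.Ioo (ρ/2) (Λ*ρ), ∫⁻ θ in Θ, ENNReal.ofReal (‖fderiv ℝ g (t + ↑r * Complex.exp (↑θ * Complex.I))‖ ^ 2)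
        ≤ ∫⁻ r in Set.Ioo (ρ/2) (Λ*ρ),
            ENNReal.ofReal (2/ρ) * ∫⁻ θ in Θ, ENNReal.ofReal (r * ‖fderiv ℝ g (t + ↑r * Complex.exp (↑θ * Complex.I))‖ ^ 2) := by
          apply setLIntegral_mono
          · exact measurable_const.mul (hN2c.measurable.lintegral_prod_right')
          · exact hin
    _ = ENNReal.ofReal (2/ρ) * ∫⁻ r in Set.Ioo (ρ/2) (Λ*ρ),
            ∫⁻ θ in Θ, ENNReal.ofReal (r * ‖fderiv ℝ g (t + ↑r * Complex.exp (↑θ * Complex.I))‖ ^ 2) :=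
          lintegral_const_mul' _ _ (hofne _)
    _ ≤ ENNReal.ofReal (2/ρ) * AQ := by
          apply mul_le_mul_right
          rw [hAQ]
          exact lintegral_mono_set (Set.Ioo_subset_Ioo (by linarith) le_rfl)
  -- part 2
  have hpart2 : ∫⁻ p in (Set.Ico ρ (Λ*ρ) ×ˢ Θ), ENNReal.ofReal (p.1 * g (t + ↑p.1 * Complex.exp (↑p.2 * Complex.I)) ^ 2)
      ≤ ENNReal.ofReal ((Λ*ρ)*(Λ*ρ)) *
          (ENNReal.ofReal (4/ρ) * (ENNReal.ofReal (4*π^2*ρ) * AQ)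
            + ENNReal.ofReal (2*(Λ*ρ)) * (ENNReal.ofReal (2/ρ) * AQ)) := by
    rw [lint_box_snd hG2c.measurable]
    have hIco : ∫⁻ r in Set.Ico ρ (Λ*ρ), ENNReal.ofReal r
        ≤ ENNReal.ofReal ((Λ*ρ)*(Λ*ρ)) := by
      calc ∫⁻ r in Set.Ico ρ (Λ*ρ), ENNReal.ofReal r
          ≤ ∫⁻ _ in Set.Ico ρ (Λ*ρ), ENNReal.ofReal (Λ*ρ) := by
            apply setLIntegral_mono measurable_const
            intro r hr
            exact ENNReal.ofReal_le_ofReal hr.2.le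
      _ = ENNReal.ofReal (Λ*ρ) * volume (Set.Ico ρ (Λ*ρ)) := setLIntegral_const _ _
      _ ≤ ENNReal.ofReal ((Λ*ρ)*(Λ*ρ)) := by
            rw [Real.volume_Ico, ← ENNReal.ofReal_mul (by positivity)]
            apply ENNReal.ofReal_le_ofReal
            nlinarith
    have hB : ∀ θ : ℝ, ∫⁻ r in Set.Ico ρ (Λ*ρ), ENNReal.ofReal (r * g (t + ↑r * Complex.exp (↑θ * Complex.I)) ^ 2)
        ≤ ENNReal.ofReal ((Λ*ρ)*(Λ*ρ)) *
            ENNReal.ofReal ((4/ρ) * T θ + 2*(Λ*ρ) * RR θ) := by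
      intro θ
      calc ∫⁻ r in Set.Ico ρ (Λ*ρ), ENNReal.ofReal (r * g (t + ↑r * Complex.exp (↑θ * Complex.I)) ^ 2)
          ≤ ∫⁻ r in Set.Ico ρ (Λ*ρ),
              ENNReal.ofReal r * ENNReal.ofReal ((4/ρ) * T θ + 2*(Λ*ρ) * RR θ) := by
            apply setLIntegral_mono
            · exact (ENNReal.measurable_ofReal.comp measurable_id).mul measurable_const
            · intro r hr
              rw [← ENNReal.ofReal_mul (le_trans hρ.le hr.1)]
              apply ENNReal.ofReal_le_ofReal
              have := F2 r θ hr.1 hr.2.le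
              have hr0 : 0 ≤ r := le_trans hρ.le hr.1
              nlinarith [this, hr0]
      _ = (∫⁻ r in Set.Ico ρ (Λ*ρ), ENNReal.ofReal r)
            * ENNReal.ofReal ((4/ρ) * T θ + 2*(Λ*ρ) * RR θ) :=
            lintegral_mul_const' _ _ (hofne _)
      _ ≤ ENNReal.ofReal ((Λ*ρ)*(Λ*ρ)) * ENNReal.ofReal ((4/ρ) * T θ + 2*(Λ*ρ) * RR θ) :=
            mul_le_mul_left hIco _
    calc ∫⁻ θ in Θ, ∫⁻ r in Set.Ico ρ (Λ*ρ), ENNReal.ofReal (r * g (t + ↑r * Complex.exp (↑θ * Complex.I)) ^ 2)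
        ≤ ∫⁻ θ in Θ, ENNReal.ofReal ((Λ*ρ)*(Λ*ρ)) *
            ENNReal.ofReal ((4/ρ) * T θ + 2*(Λ*ρ) * RR θ) := by
          apply setLIntegral_mono
          · exact measurable_const.mul (ENNReal.measurable_ofReal.comp
              ((continuous_const.mul hTcont).add (continuous_const.mul hRRcont)).measurable)
          · intro θ _
            exact hB θ
    _ = ENNReal.ofReal ((Λ*ρ)*(Λ*ρ)) *
          ∫⁻ θ in Θ, ENNReal.ofReal ((4/ρ) * T θ + 2*(Λ*ρ) * RR θ) :=
          lintegral_const_mul' _ _ (hofne _)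
    _ ≤ ENNReal.ofReal ((Λ*ρ)*(Λ*ρ)) *
          (ENNReal.ofReal (4/ρ) * (ENNReal.ofReal (4*π^2*ρ) * AQ)
            + ENNReal.ofReal (2*(Λ*ρ)) * (ENNReal.ofReal (2/ρ) * AQ)) := by
          apply mul_le_mul_right
          have hsplit2 : ∀ θ : ℝ, ENNReal.ofReal ((4/ρ) * T θ + 2*(Λ*ρ) * RR θ)
              = ENNReal.ofReal (4/ρ) * ENNReal.ofReal (T θ)
                + ENNReal.ofReal (2*(Λ*ρ)) * ENNReal.ofReal (RR θ) := by
            intro θ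
            rw [ENNReal.ofReal_add (mul_nonneg (by positivity) (hTnn θ)) (mul_nonneg (by positivity) (hRRnn θ)),
              ENNReal.ofReal_mul (by positivity), ENNReal.ofReal_mul (by positivity)]
          rw [lintegral_congr hsplit2]
          have hmT : Measurable (fun θ : ℝ => ENNReal.ofReal (4/ρ) * ENNReal.ofReal (T θ)) :=
            measurable_const.mul (ENNReal.measurable_ofReal.comp hTcont.measurable)
          rw [lintegral_add_left hmT]
          rw [lintegral_const_mul' _ _ (hofne _), lintegral_const_mul' _ _ (hofne _)]
          exact add_le_add (mul_le_mul_right hLT _) (mul_le_mul_right hLR _)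
  -- assemble
  rw [hballG, hballN, hAQeq, ← hΘ, hsplit,
    lintegral_union (measurableSet_Ico.prod hmΘ) hdisj]
  have hmerge : ∀ a b : ℝ, 0 ≤ a → 0 ≤ b →
      ENNReal.ofReal a * (ENNReal.ofReal b * AQ) = ENNReal.ofReal (a*b) * AQ := by
    intro a b ha hb
    rw [← mul_assoc, ← ENNReal.ofReal_mul ha]
  calc (∫⁻ p in (Set.Ioo (0:ℝ) ρ ×ˢ Θ), ENNReal.ofReal (p.1 * g (t + ↑p.1 * Complex.exp (↑p.2 * Complex.I)) ^ 2))
        + ∫⁻ p in (Set.Ico ρ (Λ*ρ) ×ˢ Θ), ENNReal.ofReal (p.1 * g (t + ↑p.1 * Complex.exp (↑p.2 * Complex.I)) ^ 2)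
      ≤ ENNReal.ofReal (4*π^2*ρ^2) * AQ
        + ENNReal.ofReal ((Λ*ρ)*(Λ*ρ)) *
          (ENNReal.ofReal (4/ρ) * (ENNReal.ofReal (4*π^2*ρ) * AQ)
            + ENNReal.ofReal (2*(Λ*ρ)) * (ENNReal.ofReal (2/ρ) * AQ)) :=
        add_le_add hpart1 hpart2
  _ = ENNReal.ofReal (4*π^2*ρ^2) * AQ
        + ENNReal.ofReal ((Λ*ρ)*(Λ*ρ)) *
          (ENNReal.ofReal ((4/ρ) * (4*π^2*ρ)) * AQ + ENNReal.ofReal ((2*(Λ*ρ)) * (2/ρ)) * AQ) := by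
        rw [hmerge _ _ (by positivity) (by positivity),
          hmerge _ _ (by positivity) (by positivity)]
  _ = ENNReal.ofReal (4*π^2*ρ^2) * AQ
        + ENNReal.ofReal ((Λ*ρ)*(Λ*ρ)) *
          (ENNReal.ofReal ((4/ρ) * (4*π^2*ρ) + (2*(Λ*ρ)) * (2/ρ)) * AQ) := by
        rw [← add_mul, ← ENNReal.ofReal_add (by positivity) (by positivity)]
  _ = ENNReal.ofReal (4*π^2*ρ^2) * AQ
        + ENNReal.ofReal (((Λ*ρ)*(Λ*ρ)) * ((4/ρ) * (4*π^2*ρ) + (2*(Λ*ρ)) * (2/ρ))) * AQ := by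
        rw [hmerge _ _ (by positivity) (by positivity)]
  _ = ENNReal.ofReal (4*π^2*ρ^2 + ((Λ*ρ)*(Λ*ρ)) * ((4/ρ) * (4*π^2*ρ) + (2*(Λ*ρ)) * (2/ρ))) * AQ := by
        rw [← add_mul, ← ENNReal.ofReal_add (by positivity) (by positivity)]
  _ ≤ ENNReal.ofReal ((4*π^2 + (16*π^2 + 4*Λ)*Λ^2) * ρ^2) * AQ := by
        apply mul_le_mul_left
        apply ENNReal.ofReal_le_ofReal
        have hρne : ρ ≠ 0 := ne_of_gt hρ
        have : ((Λ*ρ)*(Λ*ρ)) * ((4/ρ) * (4*π^2*ρ) + (2*(Λ*ρ)) * (2/ρ))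
            = (16*π^2 + 4*Λ) * Λ^2 * ρ^2 := by
          field_simp
          ring
        rw [this]
        nlinarith [sq_nonneg ρ, sq_nonneg π]



/-- Every subset of a closed ball admits a maximal `s`-separated finite subset. -/
lemma exists_maximal_separated (F' : Set ℂ) {R₀ : ℝ} (hF : F' ⊆ closedBall 0 R₀)
    {s : ℝ} (hs : 0 < s) :
    ∃ T : Finset ℂ, ↑T ⊆ F' ∧ (∀ a ∈ T, ∀ b ∈ T, a ≠ b → s ≤ dist a b) ∧
      ∀ z ∈ F', ∃ u ∈ T, dist z u < s := by
  obtain ⟨t, htfin, htcov⟩ := totallyBounded_iff.mp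
    (isCompact_closedBall (0:ℂ) R₀).totallyBounded (s/2) (by positivity)
  set 𝒜 : Set (Finset ℂ) :=
    {T | ↑T ⊆ F' ∧ ∀ a ∈ T, ∀ b ∈ T, a ≠ b → s ≤ dist a b} with h𝒜
  have hbound : ∀ T ∈ 𝒜, T.card ≤ htfin.toFinset.card := by
    intro T hT
    have hchoice : ∀ a ∈ T, ∃ y ∈ htfin.toFinset, a ∈ ball y (s/2) := by
      intro a ha
      have : a ∈ ⋃ y ∈ t, ball y (s/2) := htcov (hF (hT.1 ha))
      simp only [Set.mem_iUnion, exists_prop] at this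
      obtain ⟨y, hy1, hy2⟩ := this
      exact ⟨y, htfin.mem_toFinset.mpr hy1, hy2⟩
    choose φ hφ1 hφ2 using hchoice
    apply Finset.card_le_card_of_injOn (fun a => if h : a ∈ T then φ a h else 0)
    · intro a ha
      rw [Finset.mem_coe] at ha
      simp only [ha, dif_pos]
      exact hφ1 a ha
    · intro a ha b hb hab
      simp only [Finset.mem_coe] at ha hb
      simp only [ha, hb, dif_pos] at hab
      by_contra hne
      have h1 := hφ2 a ha
      have h2 := hφ2 b hb
      rw [hab] at h1
      have : dist a b < s := by
        calc dist a b ≤ dist a (φ b hb) + dist (φ b hb) b := dist_triangle _ _ _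
        _ < s/2 + s/2 := by
            rw [mem_ball] at h1 h2
            rw [dist_comm (φ b hb) b]
            exact add_lt_add h1 h2
        _ = s := by ring
      exact absurd (hT.2 a ha b hb hne) (not_le.mpr this)
  set cards : Set ℕ := (fun T : Finset ℂ => T.card) '' 𝒜 with hcards
  have hne : cards.Nonempty := ⟨0, ⟨∅, ⟨by simp, by simp⟩, rfl⟩⟩
  have hbdd : BddAbove cards := by
    refine ⟨htfin.toFinset.card, ?_⟩
    rintro n ⟨T, hT, rfl⟩
    exact hbound T hT
  have hmem := Nat.sSup_mem hne hbdd
  obtain ⟨T, hT𝒜, hTcard⟩ := hmem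
  refine ⟨T, hT𝒜.1, hT𝒜.2, ?_⟩
  intro z hz
  by_contra hcon
  push_neg at hcon
  have hznot : z ∉ T := by
    intro hzT
    have := hcon z hzT
    simp at this
    linarith
  have hins : insert z T ∈ 𝒜 := by
    constructor
    · intro a ha
      rcases Finset.mem_insert.mp ha with rfl | haT
      · exact hz
      · exact hT𝒜.1 haT
    · intro a ha b hb hab
      rcases Finset.mem_insert.mp ha with rfl | haT <;>
        rcases Finset.mem_insert.mp hb with rfl | hbT
      · exact absurd rfl hab
      · exact hcon b hbT
      · rw [dist_comm]
        exact hcon a haT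
      · exact hT𝒜.2 a haT b hbT hab
  have hTcard' : T.card = sSup cards := hTcard
  have : (insert z T).card ≤ sSup cards := le_csSup hbdd ⟨insert z T, hins, rfl⟩
  rw [Finset.card_insert_of_notMem hznot, hTcard'] at this
  omega

/-- Bounded overlap: at most 25 points of an `s`-separated set lie within `2s` of any point. -/
lemma overlap_bound {T : Finset ℂ} {s : ℝ} (hs : 0 < s)
    (hsep : ∀ a ∈ T, ∀ b ∈ T, a ≠ b → s ≤ dist a b) (x : ℂ) :
    (T.filter (fun z => dist x z < 2*s)).card ≤ 25 := by
  set T' := T.filter (fun z => dist x z < 2*s) with hT'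
  have hdisj : (↑T' : Set ℂ).PairwiseDisjoint (fun z => ball z (s/2)) := by
    intro a ha b hb hab
    apply Set.disjoint_left.mpr
    intro w hwa hwb
    have : dist a b < s := by
      calc dist a b ≤ dist a w + dist w b := dist_triangle _ _ _
      _ < s/2 + s/2 := by
          rw [mem_ball] at hwa hwb
          rw [dist_comm a w]
          exact add_lt_add hwa hwb
      _ = s := by ring
    have haT : a ∈ T := Finset.mem_of_mem_filter a ha
    have hbT : b ∈ T := Finset.mem_of_mem_filter b hb
    exact absurd (hsep a haT b hbT hab) (not_le.mpr this)
  have hunion : (⋃ z ∈ T', ball z (s/2)) ⊆ ball x (5*s/2) := by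
    intro w hw
    simp only [Set.mem_iUnion, exists_prop] at hw
    obtain ⟨z, hz, hwz⟩ := hw
    have hz2 : dist x z < 2*s := by
      have := Finset.mem_filter.mp hz
      exact this.2
    rw [mem_ball] at hwz ⊢
    calc dist w x ≤ dist w z + dist z x := dist_triangle _ _ _
    _ < s/2 + 2*s := by
        rw [dist_comm z x]
        exact add_lt_add hwz hz2
    _ = 5*s/2 := by ring
  have hmeasure : ∑ z ∈ T', volume (ball z (s/2)) ≤ volume (ball x (5*s/2)) := by
    rw [← measure_biUnion_finset hdisj (fun z _ => measurableSet_ball)]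
    exact measure_mono hunion
  have hballvol : ∀ z : ℂ, volume (ball z (s/2))
      = ENNReal.ofReal ((s/2)^2) * volume (ball (0:ℂ) 1) := by
    intro z
    have := MeasureTheory.Measure.addHaar_ball (volume : Measure ℂ) z (by positivity : (0:ℝ) < s/2).le
    rw [this, Complex.finrank_real_complex]
  have hbigvol : volume (ball x (5*s/2))
      = ENNReal.ofReal ((5*s/2)^2) * volume (ball (0:ℂ) 1) := by
    have := MeasureTheory.Measure.addHaar_ball (volume : Measure ℂ) x (by positivity : (0:ℝ) < 5*s/2).le
    rw [this, Complex.finrank_real_complex]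
  simp only [hballvol, hbigvol, Finset.sum_const, nsmul_eq_mul] at hmeasure
  have h25 : ENNReal.ofReal ((5*s/2)^2) = 25 * ENNReal.ofReal ((s/2)^2) := by
    rw [show (5*s/2:ℝ)^2 = 25 * (s/2)^2 by ring, ENNReal.ofReal_mul (by norm_num)]
    norm_num
  rw [h25, mul_assoc] at hmeasure
  set v : ENNReal := ENNReal.ofReal ((s/2)^2) * volume (ball (0:ℂ) 1) with hv
  have hv0 : v ≠ 0 := by
    rw [hv]
    apply mul_ne_zero
    · simp [ENNReal.ofReal_eq_zero]
      positivity
    · exact (measure_ball_pos volume 0 one_pos).ne'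
  have hvtop : v ≠ ⊤ := by
    rw [hv]
    exact ENNReal.mul_ne_top ENNReal.ofReal_ne_top (measure_ball_lt_top).ne
  have hfin : (T'.card : ENNReal) ≤ 25 := by
    rwa [ENNReal.mul_le_mul_iff_left hv0 hvtop] at hmeasure
  exact_mod_cast hfin

lemma main_c (C ρ R₀ : ℝ) (hC : 2 < C) (hρ : 0 < ρ) (hR₀ : 0 < R₀)
    (F' : Set ℂ) (hFsub : F' ⊆ closedBall 0 R₀)
    (hdense : ∀ x ∈ ball (0:ℂ) R₀, ∃ z ∈ F', dist x z ≤ 3*C*ρ)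
    (hcirc : ∀ z ∈ F', ∀ r : ℝ, 0 < r → r < ρ → ∃ x ∈ F', dist x z = r)
    (g : ℂ → ℝ) (hg : ContDiff ℝ (⊤:ℕ∞) g)
    (hsupp : tsupport g ⊆ ball (0:ℂ) R₀ \ F') :
    ∫⁻ w, ENNReal.ofReal (g w ^ 2)
      ≤ ENNReal.ofReal (25 * ((4*π^2 + (16*π^2 + 4*(6*C))*(6*C)^2)) * ρ^2) *
          ∫⁻ w, ENNReal.ofReal (‖fderiv ℝ g w‖ ^ 2) := by
  have hπ := Real.pi_pos
  have hC0 : (0:ℝ) < C := by linarith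
  set s : ℝ := 3*C*ρ with hs_def
  have hs : 0 < s := by positivity
  have hgc : Continuous g := hg.continuous
  have hNc : Continuous (fun y => ‖fderiv ℝ g y‖) :=
    (hg.continuous_fderiv (by simp)).norm
  have gF0 : ∀ x ∈ F', g x = 0 := by
    intro x hx
    apply image_eq_zero_of_notMem_tsupport
    intro hxs
    exact (hsupp hxs).2 hx
  obtain ⟨T, hTsub, hTsep, hTmax⟩ := exists_maximal_separated F' hFsub hs
  -- covering of the support
  have hcover : ∀ w : ℂ, g w ≠ 0 → ∃ u ∈ T, dist w u < 2*s := by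
    intro w hw
    have hwship : w ∈ tsupport g := subset_tsupport g (by simpa using hw)
    have hwball : w ∈ ball (0:ℂ) R₀ := (hsupp hwship).1
    obtain ⟨z, hzF, hzd⟩ := hdense w hwball
    obtain ⟨u, huT, hud⟩ := hTmax z hzF
    refine ⟨u, huT, ?_⟩
    calc dist w u ≤ dist w z + dist z u := dist_triangle _ _ _
    _ < s + s := add_lt_add_of_le_of_lt hzd hud
    _ = 2*s := by ring
  -- pointwise domination by indicator sum
  have hpt : ∀ w : ℂ, ENNReal.ofReal (g w ^ 2)
      ≤ ∑ u ∈ T, Set.indicator (ball u (2*s)) (fun w => ENNReal.ofReal (g w ^ 2)) w := by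
    intro w
    by_cases hw : g w = 0
    · simp [hw]
    · obtain ⟨u, huT, hud⟩ := hcover w hw
      have hwmem : w ∈ ball u (2*s) := mem_ball.mpr hud
      have : Set.indicator (ball u (2*s)) (fun w => ENNReal.ofReal (g w ^ 2)) w
          = ENNReal.ofReal (g w ^ 2) := Set.indicator_of_mem hwmem _
      rw [← this]
      exact Finset.single_le_sum
        (f := fun u => Set.indicator (ball u (2*s)) (fun w => ENNReal.ofReal (g w ^ 2)) w)
        (fun i _ => by simp) huT
  -- local Poincaré on each ball
  have hΛ : (1:ℝ) < 6*C := by linarith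
  have hball2s : ∀ u : ℂ, ball u (2*s) = ball u ((6*C)*ρ) := by
    intro u
    congr 1
    rw [hs_def]; ring
  have hloc : ∀ u ∈ T, ∫⁻ w in ball u (2*s), ENNReal.ofReal (g w ^ 2)
      ≤ ENNReal.ofReal ((4*π^2 + (16*π^2 + 4*(6*C))*(6*C)^2) * ρ^2) *
          ∫⁻ w in ball u (2*s), ENNReal.ofReal (‖fderiv ℝ g w‖ ^ 2) := by
    intro u huT
    rw [hball2s u]
    apply local_poincare hg u hρ hΛ
    intro r h1 h2
    obtain ⟨x, hxF, hxd⟩ := hcirc u (hTsub huT) r h1 h2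
    exact ⟨x, hxd, gF0 x hxF⟩
  -- overlap bound on the gradient side
  have hover : ∑ u ∈ T, ∫⁻ w in ball u (2*s), ENNReal.ofReal (‖fderiv ℝ g w‖ ^ 2)
      ≤ 25 * ∫⁻ w, ENNReal.ofReal (‖fderiv ℝ g w‖ ^ 2) := by
    have hmeas : Measurable (fun w : ℂ => ENNReal.ofReal (‖fderiv ℝ g w‖ ^ 2)) :=
      (ENNReal.continuous_ofReal.comp (hNc.pow 2)).measurable
    have h1 : ∀ u ∈ T, ∫⁻ w in ball u (2*s), ENNReal.ofReal (‖fderiv ℝ g w‖ ^ 2)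
        = ∫⁻ w, Set.indicator (ball u (2*s))
            (fun w => ENNReal.ofReal (‖fderiv ℝ g w‖ ^ 2)) w := by
      intro u _
      rw [lintegral_indicator measurableSet_ball]
    rw [Finset.sum_congr rfl h1, ← lintegral_finset_sum']
    · rw [← lintegral_const_mul' _ _ (by norm_num : (25:ENNReal) ≠ ⊤)]
      apply lintegral_mono
      intro w
      show ∑ u ∈ T, Set.indicator (ball u (2*s))
          (fun w => ENNReal.ofReal (‖fderiv ℝ g w‖ ^ 2)) w
        ≤ 25 * ENNReal.ofReal (‖fderiv ℝ g w‖ ^ 2)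
      classical
      have hsum : ∑ u ∈ T, Set.indicator (ball u (2*s))
          (fun w => ENNReal.ofReal (‖fderiv ℝ g w‖ ^ 2)) w
          = ((T.filter (fun u => dist w u < 2*s)).card : ENNReal)
              * ENNReal.ofReal (‖fderiv ℝ g w‖ ^ 2) := by
        rw [← Finset.sum_filter_add_sum_filter_not T (fun u => dist w u < 2*s)]
        have e1 : ∑ u ∈ T.filter (fun u => dist w u < 2*s),
            Set.indicator (ball u (2*s)) (fun w => ENNReal.ofReal (‖fderiv ℝ g w‖ ^ 2)) w
            = ∑ _u ∈ T.filter (fun u => dist w u < 2*s),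
                ENNReal.ofReal (‖fderiv ℝ g w‖ ^ 2) :=
          Finset.sum_congr rfl (fun u hu =>
            Set.indicator_of_mem (mem_ball.mpr (Finset.mem_filter.mp hu).2) _)
        have e2 : ∑ u ∈ T.filter (fun u => ¬ dist w u < 2*s),
            Set.indicator (ball u (2*s)) (fun w => ENNReal.ofReal (‖fderiv ℝ g w‖ ^ 2)) w
            = 0 :=
          Finset.sum_eq_zero (fun u hu =>
            Set.indicator_of_notMem (fun hmem =>
              (Finset.mem_filter.mp hu).2 (mem_ball.mp hmem)) _)
        rw [e1, e2, add_zero, Finset.sum_const, nsmul_eq_mul]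
      rw [hsum]
      apply mul_le_mul_left
      have := overlap_bound hs hTsep w
      exact_mod_cast this
    · intro u _
      exact (hmeas.indicator measurableSet_ball).aemeasurable
  -- assemble
  calc ∫⁻ w, ENNReal.ofReal (g w ^ 2)
      ≤ ∫⁻ w, ∑ u ∈ T, Set.indicator (ball u (2*s))
          (fun w => ENNReal.ofReal (g w ^ 2)) w := lintegral_mono hpt
  _ = ∑ u ∈ T, ∫⁻ w, Set.indicator (ball u (2*s))
        (fun w => ENNReal.ofReal (g w ^ 2)) w := by
      apply lintegral_finset_sum'
      intro u _
      have hgme : Measurable (fun w : ℂ => ENNReal.ofReal (g w ^ 2)) :=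
        (ENNReal.continuous_ofReal.comp (hgc.pow 2)).measurable
      exact (hgme.indicator measurableSet_ball).aemeasurable
  _ = ∑ u ∈ T, ∫⁻ w in ball u (2*s), ENNReal.ofReal (g w ^ 2) := by
      apply Finset.sum_congr rfl
      intro u _
      rw [lintegral_indicator measurableSet_ball]
  _ ≤ ∑ u ∈ T, ENNReal.ofReal ((4*π^2 + (16*π^2 + 4*(6*C))*(6*C)^2) * ρ^2) *
        ∫⁻ w in ball u (2*s), ENNReal.ofReal (‖fderiv ℝ g w‖ ^ 2) :=
      Finset.sum_le_sum hloc
  _ = ENNReal.ofReal ((4*π^2 + (16*π^2 + 4*(6*C))*(6*C)^2) * ρ^2) *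
        ∑ u ∈ T, ∫⁻ w in ball u (2*s), ENNReal.ofReal (‖fderiv ℝ g w‖ ^ 2) :=
      (Finset.mul_sum _ _ _).symm
  _ ≤ ENNReal.ofReal ((4*π^2 + (16*π^2 + 4*(6*C))*(6*C)^2) * ρ^2) *
        (25 * ∫⁻ w, ENNReal.ofReal (‖fderiv ℝ g w‖ ^ 2)) := mul_le_mul_right hover _
  _ = ENNReal.ofReal (25 * ((4*π^2 + (16*π^2 + 4*(6*C))*(6*C)^2)) * ρ^2) *
        ∫⁻ w, ENNReal.ofReal (‖fderiv ℝ g w‖ ^ 2) := by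
      rw [← mul_assoc]
      congr 1
      have h25 : (25 : ENNReal) = ENNReal.ofReal 25 := by norm_num
      rw [h25, ← ENNReal.ofReal_mul (by positivity)]
      congr 1
      ring

end PoincareHelpers

/-- Poincaré inequality with constant `C'ρ²` for the ball perforated by a closed set `F`
which is `3Cρ`-dense and meets every small circle around its points. -/
theorem stmt3 (C R₀ : ℝ) (hC : 2 < C) (hR₀ : 0 < R₀) :
    ∃ C' > (0 : ℝ), ∃ ρ₀ > (0 : ℝ), ∀ ρ : ℝ, 0 < ρ → ρ < ρ₀ →
      ∀ F : Set E2, IsClosed F → F ⊆ closedBall (0 : E2) R₀ →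
        (∀ x ∈ ball (0 : E2) R₀, ∃ z ∈ F, dist x z ≤ 3 * C * ρ) →
        (∀ z ∈ F, ∀ r : ℝ, 0 < r → r < ρ → ∃ x ∈ F, dist x z = r) →
        ∀ f : E2 → ℝ, ContDiff ℝ (⊤ : ℕ∞) f → HasCompactSupport f →
          tsupport f ⊆ ball (0 : E2) R₀ \ F →
          ∫ x, f x ^ 2 ≤ C' * ρ ^ 2 * ∫ x, ‖gradient f x‖ ^ 2 := by
  have hπ := Real.pi_pos
  have hC0 : (0:ℝ) < C := by linarith
  refine ⟨25 * ((4*π^2 + (16*π^2 + 4*(6*C))*(6*C)^2)), by positivity, 1, one_pos, ?_⟩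
  intro ρ hρ hρ1 F hFcl hFsub hdense hcirc f hf hfc hfsupp
  set e : ℂ ≃ₗᵢ[ℝ] E2 := Complex.orthonormalBasisOneI.repr with he
  set g : ℂ → ℝ := fun w => f (e w) with hg_def
  have hfcont : Continuous f := hf.continuous
  have hg : ContDiff ℝ (⊤:ℕ∞) g :=
    hf.comp (e.toContinuousLinearEquiv.toContinuousLinearMap.contDiff)
  have hgcont : Continuous g := hg.continuous
  have he0 : e 0 = 0 := map_zero _
  have hed : ∀ w w' : ℂ, dist (e w) (e w') = dist w w' := fun w w' =>
    e.isometry.dist_eq w w'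
  set F' : Set ℂ := e ⁻¹' F with hF'
  -- transferred hypotheses
  have hFsub' : F' ⊆ closedBall (0:ℂ) R₀ := by
    intro w hw
    have := hFsub hw
    rw [mem_closedBall] at this ⊢
    rw [← hed w 0, he0]
    exact this
  have hdense' : ∀ x ∈ ball (0:ℂ) R₀, ∃ z ∈ F', dist x z ≤ 3*C*ρ := by
    intro x hx
    have hx' : e x ∈ ball (0:E2) R₀ := by
      rw [mem_ball] at hx ⊢
      rw [← he0, hed]
      exact hx
    obtain ⟨z, hzF, hzd⟩ := hdense (e x) hx'
    refine ⟨e.symm z, ?_, ?_⟩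
    · rw [hF', Set.mem_preimage, e.apply_symm_apply]
      exact hzF
    · rw [← hed x (e.symm z), e.apply_symm_apply]
      exact hzd
  have hcirc' : ∀ z ∈ F', ∀ r : ℝ, 0 < r → r < ρ → ∃ x ∈ F', dist x z = r := by
    intro z hz r h1 h2
    obtain ⟨x, hxF, hxd⟩ := hcirc (e z) hz r h1 h2
    refine ⟨e.symm x, ?_, ?_⟩
    · rw [hF', Set.mem_preimage, e.apply_symm_apply]
      exact hxF
    · rw [← hed (e.symm x) z, e.apply_symm_apply]
      exact hxd
  have hsupp' : tsupport g ⊆ ball (0:ℂ) R₀ \ F' := by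
    have hts : tsupport g = e ⁻¹' tsupport f := by
      rw [tsupport, tsupport]
      have hsup : Function.support g = ⇑e ⁻¹' Function.support f := by
        ext w
        simp [hg_def, Function.mem_support]
      rw [hsup]
      exact (e.toHomeomorph.preimage_closure _).symm
    rw [hts]
    intro w hw
    have := hfsupp hw
    constructor
    · rw [mem_ball, ← hed w 0, he0]
      exact mem_ball.mp this.1
    · intro hwF
      exact this.2 hwF
  -- main inequality at the lintegral level
  have hmain := main_c C ρ R₀ hC hρ hR₀ F' hFsub' hdense' hcirc' g hg hsupp'
  -- measure preserving transfer
  have hmp : MeasurePreserving e volume volume := e.measurePreserving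
  have hNf : Continuous (fun x : E2 => ‖fderiv ℝ f x‖) :=
    (hf.continuous_fderiv (by simp)).norm
  have htransG : ∫⁻ w, ENNReal.ofReal (g w ^ 2) = ∫⁻ x, ENNReal.ofReal (f x ^ 2) := by
    exact hmp.lintegral_comp ((ENNReal.continuous_ofReal.comp (hfcont.pow 2)).measurable)
  have hfdeq : ∀ w : ℂ, ‖fderiv ℝ g w‖ = ‖fderiv ℝ f (e w)‖ := by
    intro w
    have h1 : HasFDerivAt g ((fderiv ℝ f (e w)).comp
        (e.toContinuousLinearEquiv : ℂ →L[ℝ] E2)) w := by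
      apply HasFDerivAt.comp
      · exact ((hf.differentiable (by simp)) (e w)).hasFDerivAt
      · exact (e.toContinuousLinearEquiv : ℂ →L[ℝ] E2).hasFDerivAt
    rw [h1.fderiv]
    exact ContinuousLinearMap.opNorm_comp_linearIsometryEquiv _ _
  have htransN : ∫⁻ w, ENNReal.ofReal (‖fderiv ℝ g w‖ ^ 2)
      = ∫⁻ x, ENNReal.ofReal (‖fderiv ℝ f x‖ ^ 2) := by
    have h1 : ∀ w : ℂ, ENNReal.ofReal (‖fderiv ℝ g w‖ ^ 2)
        = ENNReal.ofReal (‖fderiv ℝ f (e w)‖ ^ 2) := by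
      intro w
      rw [hfdeq w]
    rw [lintegral_congr h1]
    exact hmp.lintegral_comp ((ENNReal.continuous_ofReal.comp (hNf.pow 2)).measurable)
  rw [htransG, htransN] at hmain
  -- convert to Bochner integrals
  have hsqcs : HasCompactSupport (fun x : E2 => f x ^ 2) :=
    hfc.comp_left (g := fun y : ℝ => y ^ 2) (by norm_num)
  have hsqint : Integrable (fun x : E2 => f x ^ 2) :=
    (hfcont.pow 2).integrable_of_hasCompactSupport hsqcs
  have hNcs : HasCompactSupport (fun x : E2 => ‖fderiv ℝ f x‖ ^ 2) := by
    have h1 : HasCompactSupport (fderiv ℝ f) := hfc.fderiv ℝ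
    exact h1.comp_left (g := fun A : E2 →L[ℝ] ℝ => ‖A‖ ^ 2) (by norm_num)
  have hNint : Integrable (fun x : E2 => ‖fderiv ℝ f x‖ ^ 2) :=
    (hNf.pow 2).integrable_of_hasCompactSupport hNcs
  have hL : ENNReal.ofReal (∫ x, f x ^ 2) = ∫⁻ x, ENNReal.ofReal (f x ^ 2) :=
    MeasureTheory.ofReal_integral_eq_lintegral_ofReal hsqint
      (by filter_upwards with x using sq_nonneg _)
  have hR : ENNReal.ofReal (∫ x, ‖fderiv ℝ f x‖ ^ 2)
      = ∫⁻ x, ENNReal.ofReal (‖fderiv ℝ f x‖ ^ 2) :=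
    MeasureTheory.ofReal_integral_eq_lintegral_ofReal hNint
      (by filter_upwards with x using sq_nonneg _)
  have hgradeq : ∀ x : E2, ‖gradient f x‖ = ‖fderiv ℝ f x‖ := by
    intro x
    rw [gradient]
    exact LinearIsometryEquiv.norm_map _ _
  have hNnn : 0 ≤ ∫ x, ‖fderiv ℝ f x‖ ^ 2 :=
    integral_nonneg (fun x => sq_nonneg _)
  have hfinal : ENNReal.ofReal (∫ x, f x ^ 2)
      ≤ ENNReal.ofReal ((25 * ((4*π^2 + (16*π^2 + 4*(6*C))*(6*C)^2)) * ρ^2)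
          * ∫ x, ‖fderiv ℝ f x‖ ^ 2) := by
    rw [hL, ENNReal.ofReal_mul (by positivity), hR]
    exact hmain
  have := (ENNReal.ofReal_le_ofReal_iff (by positivity)).mp hfinal
  calc ∫ x, f x ^ 2 ≤ (25 * ((4*π^2 + (16*π^2 + 4*(6*C))*(6*C)^2)) * ρ^2)
        * ∫ x, ‖fderiv ℝ f x‖ ^ 2 := this
  _ = 25 * ((4*π^2 + (16*π^2 + 4*(6*C))*(6*C)^2)) * ρ^2 * ∫ x, ‖gradient f x‖ ^ 2 := by
      congr 1
      apply integral_congr_ae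
      filter_upwards with x
      rw [hgradeq x]
end
end

section
/- Let R̃₀ > 0. There exists a constant C₀ > 0 such that for every k > 0 and every u ∈ C_c^∞(B(0,R̃₀)), one has C₀ k^{−2} ∫ u(x)² e^{2k x₁} dx ≤ ∫ (k^{−2} Δu(x))² e^{2k x₁} dx, i.e. C₀ k² ∫ u(x)² e^{2k x₁} dx ≤ ∫ (Δu(x))² e^{2k x₁} dx, where x₁ denotes the first coordinate of x ∈ ℝ². -/
open MeasureTheory Metric Real

noncomputable section

/-!
Write `v = e^{k x₁} u` (the coordinate `x₁` is `x 0` here). Then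
`e^{k x₁} Δu = (Δv + k² v) - 2k ∂₁v`, and the cross term `∫ (Δv + k² v) ∂₁v` vanishes by
integration by parts: `∫ v ∂₁v = 0`, and `∫ ∂ᵢ²v ∂₁v = -∫ ∂ᵢv ∂₁∂ᵢv = 0`. Hence
`∫ (Δu)² e^{2k x₁} ≥ 4k² ∫ (∂₁v)²`, and the Poincaré inequality `∫ v² ≤ 4R² ∫ (∂₁v)²` on the
slab `|x₁| ≤ R` gives the claim with `C₀ = R⁻²`.
-/

section

variable {E : Type*} [NormedAddCommGroup E] [NormedSpace ℝ E]

theorem ContDiff.fderiv_apply_const {m n : WithTop ℕ∞} {f : E → ℝ} (hf : ContDiff ℝ m f)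
    (hnm : n + 1 ≤ m) (v : E) : ContDiff ℝ n (fun x => fderiv ℝ f x v) :=
  (hf.fderiv_right hnm).clm_apply contDiff_const

theorem fderiv_fderiv_apply_comm {f : E → ℝ} (hf : ContDiff ℝ 2 f) (x a b : E) :
    fderiv ℝ (fun y => fderiv ℝ f y a) x b = fderiv ℝ (fun y => fderiv ℝ f y b) x a := by
  have hd : DifferentiableAt ℝ (fderiv ℝ f) x :=
    (hf.fderiv_right (m := 1) (by norm_num)).differentiable one_ne_zero x
  have hflip : ∀ c : E, fderiv ℝ (fun y => fderiv ℝ f y c) x = (fderiv ℝ (fderiv ℝ f) x).flip c :=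
    fun c => by simp [fderiv_clm_apply hd (differentiableAt_const c)]
  simpa [hflip] using (hf.contDiffAt.isSymmSndFDerivAt (by simp)) b a

theorem fderiv_exp_mul_apply (ℓ : E →L[ℝ] ℝ) {u : E → ℝ} {x : E} (hu : DifferentiableAt ℝ u x)
    (a : E) :
    fderiv ℝ (fun y => exp (ℓ y) * u y) x a = exp (ℓ x) * (ℓ a * u x + fderiv ℝ u x a) := by
  rw [fderiv_fun_mul ℓ.differentiableAt.exp hu, fderiv_exp ℓ.differentiableAt]
  simp only [add_apply, smul_apply, smul_eq_mul, ContinuousLinearMap.fderiv]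
  ring

theorem fderiv_fderiv_exp_mul_apply (ℓ : E →L[ℝ] ℝ) {u : E → ℝ} (hu : ContDiff ℝ 2 u) (x a : E) :
    fderiv ℝ (fun y => fderiv ℝ (fun z => exp (ℓ z) * u z) y a) x a =
      exp (ℓ x) * (ℓ a ^ 2 * u x + 2 * ℓ a * fderiv ℝ u x a
        + fderiv ℝ (fun y => fderiv ℝ u y a) x a) := by
  have hu' : Differentiable ℝ u := hu.differentiable two_ne_zero
  have hDu : Differentiable ℝ fun y => fderiv ℝ u y a :=
    (hu.fderiv_apply_const (n := 1) (by norm_num) a).differentiable one_ne_zero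
  simp_rw [fderiv_exp_mul_apply ℓ (hu' _) a]
  have hDv : DifferentiableAt ℝ (fun y => ℓ a * u y + fderiv ℝ u y a) x :=
    ((hu' x).const_mul _).add (hDu x)
  rw [fderiv_exp_mul_apply ℓ hDv a,
    fderiv_fun_add ((hu' x).const_mul _) (hDu x), fderiv_const_mul (hu' x)]
  simp only [add_apply, smul_apply, smul_eq_mul]
  ring

variable [FiniteDimensional ℝ E] [MeasurableSpace E] [BorelSpace E]
  {μ : Measure E} [μ.IsAddHaarMeasure]

theorem integral_mul_fderiv_eq_neg_fderiv_mul {f g : E → ℝ} (hf : ContDiff ℝ 1 f)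
    (hg : ContDiff ℝ 1 g) (hgc : HasCompactSupport g) (v : E) :
    ∫ x, f x * fderiv ℝ g x v ∂μ = - ∫ x, fderiv ℝ f x v * g x ∂μ := by
  have hf' : Continuous fun x => fderiv ℝ f x v :=
    (hf.fderiv_apply_const (zero_add _).le v).continuous
  have hg' : Continuous fun x => fderiv ℝ g x v :=
    (hg.fderiv_apply_const (zero_add _).le v).continuous
  apply integral_mul_fderiv_eq_neg_fderiv_mul_of_integrable
  · exact (hf'.mul hg.continuous).integrable_of_hasCompactSupport hgc.mul_left
  · exact (hf.continuous.mul hg').integrable_of_hasCompactSupport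
      (hgc.fderiv_apply (𝕜 := ℝ) v).mul_left
  · exact (hf.continuous.mul hg.continuous).integrable_of_hasCompactSupport hgc.mul_left
  · exact fun x _ => hf.differentiable one_ne_zero x
  · exact fun x _ => hg.differentiable one_ne_zero x

theorem integral_mul_fderiv_self_eq_zero {f : E → ℝ} (hf : ContDiff ℝ 1 f)
    (hfc : HasCompactSupport f) (v : E) : ∫ x, f x * fderiv ℝ f x v ∂μ = 0 := by
  have h := integral_mul_fderiv_eq_neg_fderiv_mul (μ := μ) hf hf hfc v
  simp_rw [mul_comm (fderiv ℝ f _ v)] at h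
  linarith

theorem integral_fderiv_fderiv_mul_fderiv_eq_zero {f : E → ℝ} (hf : ContDiff ℝ 2 f)
    (hfc : HasCompactSupport f) (a b : E) :
    ∫ x, fderiv ℝ (fun y => fderiv ℝ f y b) x b * fderiv ℝ f x a ∂μ = 0 := by
  have hfa : ContDiff ℝ 1 fun y => fderiv ℝ f y a := hf.fderiv_apply_const (by norm_num) a
  have hfb : ContDiff ℝ 1 fun y => fderiv ℝ f y b := hf.fderiv_apply_const (by norm_num) b
  have hfbc : HasCompactSupport fun y => fderiv ℝ f y b := hfc.fderiv_apply (𝕜 := ℝ) b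
  calc ∫ x, fderiv ℝ (fun y => fderiv ℝ f y b) x b * fderiv ℝ f x a ∂μ
      = ∫ x, fderiv ℝ f x a * fderiv ℝ (fun y => fderiv ℝ f y b) x b ∂μ := by
        simp_rw [mul_comm]
    _ = - ∫ x, fderiv ℝ f x b * fderiv ℝ (fun y => fderiv ℝ f y b) x a ∂μ := by
        rw [integral_mul_fderiv_eq_neg_fderiv_mul hfa hfb hfbc b]
        simp_rw [fderiv_fderiv_apply_comm hf _ a b, mul_comm]
    _ = 0 := by rw [integral_mul_fderiv_self_eq_zero hfb hfbc a, neg_zero]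

theorem integral_sq_eq_integral_mul_fderiv {f : E → ℝ} (hf : ContDiff ℝ 1 f)
    (hfc : HasCompactSupport f) (ℓ : E →L[ℝ] ℝ) {a : E} (ha : ℓ a = 1) :
    ∫ x, f x ^ 2 ∂μ = ∫ x, -2 * ℓ x * (f x * fderiv ℝ f x a) ∂μ := by
  have hsq : ∀ x, fderiv ℝ (fun y => f y * f y) x a = 2 * (f x * fderiv ℝ f x a) := fun x => by
    rw [fderiv_fun_mul (hf.differentiable one_ne_zero x) (hf.differentiable one_ne_zero x)]
    simp only [add_apply, smul_apply, smul_eq_mul]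
    ring
  have h := integral_mul_fderiv_eq_neg_fderiv_mul (μ := μ) ℓ.contDiff (hf.mul hf) hfc.mul_left a
  simp only [hsq, ContinuousLinearMap.fderiv, ha, one_mul] at h
  calc ∫ x, f x ^ 2 ∂μ = - ∫ x, ℓ x * (2 * (f x * fderiv ℝ f x a)) ∂μ := by
        simp_rw [h, neg_neg, pow_two]
    _ = ∫ x, -2 * ℓ x * (f x * fderiv ℝ f x a) ∂μ := by
        rw [← integral_neg]
        congr 1 with x
        ring

-- Absorb the cross term of `integral_sq_eq_integral_mul_fderiv` by AM-GM.
theorem integral_sq_le_mul_integral_fderiv_sq {f : E → ℝ} (hf : ContDiff ℝ 1 f)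
    (hfc : HasCompactSupport f) (ℓ : E →L[ℝ] ℝ) {a : E} (ha : ℓ a = 1) {R : ℝ}
    (hR : ∀ x ∈ tsupport f, |ℓ x| ≤ R) :
    ∫ x, f x ^ 2 ∂μ ≤ 4 * R ^ 2 * ∫ x, fderiv ℝ f x a ^ 2 ∂μ := by
  set d : E → ℝ := fun x => fderiv ℝ f x a
  have hd : Continuous d := (hf.fderiv_apply_const (zero_add _).le a).continuous
  have hdc : HasCompactSupport d := hfc.fderiv_apply (𝕜 := ℝ) a
  have hpt : ∀ x, -2 * ℓ x * (f x * d x) ≤ f x ^ 2 / 2 + 2 * R ^ 2 * d x ^ 2 := by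
    intro x
    by_cases hx : x ∈ tsupport f
    · have hℓR : ℓ x ^ 2 ≤ R ^ 2 := sq_le_sq' (abs_le.mp (hR x hx)).1 (abs_le.mp (hR x hx)).2
      nlinarith [sq_nonneg (f x + 2 * ℓ x * d x), mul_le_mul_of_nonneg_right hℓR (sq_nonneg (d x))]
    · simp [image_eq_zero_of_notMem_tsupport hx]
      positivity
  have hf2 : Integrable (fun x => f x ^ 2) μ :=
    (hf.continuous.memLp_of_hasCompactSupport hfc).integrable_sq
  have hd2 : Integrable (fun x => d x ^ 2) μ :=
    (hd.memLp_of_hasCompactSupport hdc).integrable_sq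
  have hcross : Integrable (fun x => -2 * ℓ x * (f x * d x)) μ :=
    ((continuous_const.mul ℓ.continuous).mul (hf.continuous.mul hd)).integrable_of_hasCompactSupport
      (hfc.mul_right.mul_left)
  have h : ∫ x, f x ^ 2 ∂μ ≤ (∫ x, f x ^ 2 ∂μ) / 2 + 2 * R ^ 2 * ∫ x, d x ^ 2 ∂μ :=
    calc ∫ x, f x ^ 2 ∂μ = ∫ x, -2 * ℓ x * (f x * d x) ∂μ :=
        integral_sq_eq_integral_mul_fderiv hf hfc ℓ ha
      _ ≤ ∫ x, (f x ^ 2 / 2 + 2 * R ^ 2 * d x ^ 2) ∂μ :=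
        integral_mono hcross ((hf2.div_const 2).add (hd2.const_mul _)) hpt
      _ = (∫ x, f x ^ 2 ∂μ) / 2 + 2 * R ^ 2 * ∫ x, d x ^ 2 ∂μ := by
        rw [integral_add (hf2.div_const 2) (hd2.const_mul _), integral_div, integral_const_mul]
  linarith

end

theorem fderiv_exp_mul_single_zero (k : ℝ) {u : E2 → ℝ} {x : E2} (hu : DifferentiableAt ℝ u x) :
    fderiv ℝ (fun y => exp (k * y 0) * u y) x (EuclideanSpace.single 0 1) =
      exp (k * x 0) * (k * u x + fderiv ℝ u x (EuclideanSpace.single 0 1)) := by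
  have h := fderiv_exp_mul_apply (k • EuclideanSpace.proj (0 : Fin 2)) hu
    (EuclideanSpace.single 0 1)
  simp only [FunLike.coe_smul, Pi.smul_apply, EuclideanSpace.coe_proj, smul_eq_mul] at h
  simpa using h

theorem lap_exp_mul (k : ℝ) {u : E2 → ℝ} (hu : ContDiff ℝ 2 u) (x : E2) :
    lap (fun y => exp (k * y 0) * u y) x =
      exp (k * x 0) * (k ^ 2 * u x + 2 * k * fderiv ℝ u x (EuclideanSpace.single 0 1)
        + lap u x) := by
  have h := fun i : Fin 2 => fderiv_fderiv_exp_mul_apply (k • EuclideanSpace.proj (0 : Fin 2)) hu x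
    (EuclideanSpace.single i 1)
  simp only [FunLike.coe_smul, Pi.smul_apply, EuclideanSpace.coe_proj, smul_eq_mul] at h
  simp [lap, Fin.sum_univ_two, h]
  ring

theorem ContDiff.continuous_lap {f : E2 → ℝ} (hf : ContDiff ℝ 2 f) : Continuous (lap f) :=
  continuous_finsetSum _ fun i _ =>
    ((hf.fderiv_apply_const (n := 1) (by norm_num) _).fderiv_apply_const (zero_add _).le
      _).continuous

theorem HasCompactSupport.lap {f : E2 → ℝ} (hf : HasCompactSupport f) :
    HasCompactSupport (lap f) := by
  rw [show _root_.lap f = fun x => _ from funext fun x => Fin.sum_univ_two _]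
  exact ((hf.fderiv_apply (𝕜 := ℝ) _).fderiv_apply (𝕜 := ℝ) _).add
    ((hf.fderiv_apply (𝕜 := ℝ) _).fderiv_apply (𝕜 := ℝ) _)

theorem integral_lap_mul_fderiv_eq_zero {f : E2 → ℝ} (hf : ContDiff ℝ 2 f)
    (hfc : HasCompactSupport f) (a : E2) : ∫ x, lap f x * fderiv ℝ f x a = 0 := by
  have hterm : ∀ i : Fin 2, Integrable fun x =>
      fderiv ℝ (fun y => fderiv ℝ f y (EuclideanSpace.single i 1)) x (EuclideanSpace.single i 1)
        * fderiv ℝ f x a := fun i =>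
    (((hf.fderiv_apply_const (n := 1) (by norm_num) _).fderiv_apply_const (zero_add _).le
      _).continuous.mul (hf.fderiv_apply_const (n := 1) (by norm_num) a).continuous
      ).integrable_of_hasCompactSupport (hfc.fderiv_apply (𝕜 := ℝ) a).mul_left
  simp only [lap, Finset.sum_mul]
  rw [integral_finsetSum _ fun i _ => hterm i]
  exact Finset.sum_eq_zero fun i _ => integral_fderiv_fderiv_mul_fderiv_eq_zero hf hfc a _

theorem integral_sq_lap_sub_fderiv_add {f : E2 → ℝ} (hf : ContDiff ℝ 2 f)
    (hfc : HasCompactSupport f) (k : ℝ) (a : E2) :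
    ∫ x, (lap f x - 2 * k * fderiv ℝ f x a + k ^ 2 * f x) ^ 2 =
      (∫ x, (lap f x + k ^ 2 * f x) ^ 2) + 4 * k ^ 2 * ∫ x, fderiv ℝ f x a ^ 2 := by
  set S : E2 → ℝ := fun x => lap f x + k ^ 2 * f x
  set T : E2 → ℝ := fun x => fderiv ℝ f x a
  have hS : Continuous S := hf.continuous_lap.add (continuous_const.mul hf.continuous)
  have hSc : HasCompactSupport S := hfc.lap.add hfc.mul_left
  have hT : Continuous T := (hf.fderiv_apply_const (n := 1) (by norm_num) a).continuous
  have hTc : HasCompactSupport T := hfc.fderiv_apply (𝕜 := ℝ) a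
  have hS2 : Integrable fun x => S x ^ 2 := (hS.memLp_of_hasCompactSupport hSc).integrable_sq
  have hT2 : Integrable fun x => T x ^ 2 := (hT.memLp_of_hasCompactSupport hTc).integrable_sq
  have hST : Integrable fun x => S x * T x :=
    (hS.mul hT).integrable_of_hasCompactSupport hTc.mul_left
  have hcross : ∫ x, S x * T x = 0 := by
    have hlap : Integrable fun x => lap f x * T x :=
      (hf.continuous_lap.mul hT).integrable_of_hasCompactSupport hTc.mul_left
    have hself : Integrable fun x => k ^ 2 * (f x * T x) :=
      ((hf.continuous.mul hT).integrable_of_hasCompactSupport hTc.mul_left).const_mul _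
    simp only [S, add_mul, mul_assoc]
    rw [integral_add hlap hself, integral_const_mul, integral_lap_mul_fderiv_eq_zero hf hfc a,
      integral_mul_fderiv_self_eq_zero (hf.of_le (by norm_num)) hfc a, mul_zero, add_zero]
  calc ∫ x, (lap f x - 2 * k * fderiv ℝ f x a + k ^ 2 * f x) ^ 2
      = ∫ x, (S x ^ 2 - 4 * k * (S x * T x) + 4 * k ^ 2 * T x ^ 2) := by
        congr 1 with x
        ring
    _ = (∫ x, S x ^ 2) - 4 * k * (∫ x, S x * T x) + 4 * k ^ 2 * ∫ x, T x ^ 2 := by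
        have hdiff : Integrable fun x => S x ^ 2 - 4 * k * (S x * T x) := hS2.sub (hST.const_mul _)
        rw [integral_add hdiff (hT2.const_mul _),
          integral_sub hS2 (hST.const_mul _), integral_const_mul, integral_const_mul]
    _ = _ := by rw [hcross, mul_zero, sub_zero]

/-- Boundary-case Carleman inequality with linear weight `ω(x) = x₁`. -/
theorem stmt7 (Rt₀ : ℝ) (hRt₀ : 0 < Rt₀) :
    ∃ C₀ > (0 : ℝ), ∀ k : ℝ, 0 < k →
      ∀ u : E2 → ℝ, ContDiff ℝ (⊤ : ℕ∞) u → HasCompactSupport u →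
        tsupport u ⊆ ball (0 : E2) Rt₀ →
        C₀ * k ^ 2 * ∫ x : E2, u x ^ 2 * Real.exp (2 * k * x 0) ≤
          ∫ x : E2, (lap u x) ^ 2 * Real.exp (2 * k * x 0) := by
  refine ⟨(Rt₀ ^ 2)⁻¹, by positivity, fun k _ u hu huc hsupp => ?_⟩
  set e₀ : E2 := EuclideanSpace.single 0 1
  set v : E2 → ℝ := fun x => exp (k * x 0) * u x
  have hu2 : ContDiff ℝ 2 u := hu.of_le (WithTop.coe_le_coe.mpr le_top)
  have hv : ContDiff ℝ 2 v :=
    (contDiff_const.mul (EuclideanSpace.proj (0 : Fin 2)).contDiff).exp.mul hu2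
  have hvc : HasCompactSupport v := huc.mul_left
  have hslab : ∀ x ∈ tsupport v, |EuclideanSpace.proj (0 : Fin 2) x| ≤ Rt₀ := fun x hx =>
    (PiLp.norm_apply_le x 0).trans
      (mem_ball_zero_iff.mp (hsupp (tsupport_mul_subset_right hx))).le
  have hexp : ∀ x : E2, exp (2 * k * x 0) = exp (k * x 0) ^ 2 := fun x => by
    rw [← exp_nat_mul]; ring_nf
  have hlhs : ∫ x, u x ^ 2 * exp (2 * k * x 0) = ∫ x, v x ^ 2 := by
    congr 1 with x
    rw [hexp]; ring
  have hrhs : ∫ x, lap u x ^ 2 * exp (2 * k * x 0) =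
      ∫ x, (lap v x - 2 * k * fderiv ℝ v x e₀ + k ^ 2 * v x) ^ 2 := by
    congr 1 with x
    rw [hexp, lap_exp_mul k hu2, fderiv_exp_mul_single_zero k (hu2.differentiable two_ne_zero x)]
    ring
  have hpoinc := integral_sq_le_mul_integral_fderiv_sq (μ := volume) (hv.of_le (by norm_num))
    hvc (EuclideanSpace.proj 0) (a := e₀) (by simp [e₀]) hslab
  have hS : 0 ≤ ∫ x, (lap v x + k ^ 2 * v x) ^ 2 := integral_nonneg fun x => sq_nonneg _
  rw [hlhs, hrhs, integral_sq_lap_sub_fderiv_add hv hvc k e₀]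
  calc (Rt₀ ^ 2)⁻¹ * k ^ 2 * ∫ x, v x ^ 2
      ≤ (Rt₀ ^ 2)⁻¹ * k ^ 2 * (4 * Rt₀ ^ 2 * ∫ x, fderiv ℝ v x e₀ ^ 2) := by gcongr
    _ = 4 * k ^ 2 * ∫ x, fderiv ℝ v x e₀ ^ 2 := by field_simp
    _ ≤ _ := le_add_of_nonneg_left hS
end
end

section
/- Let 0 < R̃ < R₀. There exist constants C̃ > 0 (depending only on R₀) and an absolute constant C > 0 such that for every 0 < ρ < R̃/100, every ball D = B(y,ρ) with 5D ⊆ B(0,R₀) \ B(0,R̃), and every k > 0: the annulus 4D \ 3D contains a ball B̃ of radius ρ/4 on which inf_{x ∈ B̃} e^{2k/|x|} ≥ e^{C̃ k ρ} · sup_{x ∈ 3D \ 2D} e^{2k/|x|}; consequently ∫_{3D \ 2D} e^{2k/|x|} dx ≤ C e^{−C̃ k ρ} ∫_{4D \ 3D} e^{2k/|x|} dx. -/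
/-! The ball `B̃` of radius `ρ/4` centred on the segment from `0` to `y`, at distance `7ρ/2` from
`y`, lies in `4D \ 3D` and is closer to the origin than `3D` by at least `ρ/4`. Since
`|1/a - 1/b| ≥ |b - a|/R₀²` on `(0, R₀]`, the weight `e^{2k/|x|}` on `B̃` beats its supremum
`e^{2k/(|y| - 3ρ)}` over `3D` by the factor `e^{kρ/(2R₀²)}`. Bounding the integral over
`3D \ 2D` by that supremum times `|3D| = 144 |B̃|` gives the integral estimate. -/

open MeasureTheory Metric Real

noncomputable section

lemma div_sq_le_inv_sub_inv {a b R δ : ℝ} (ha : 0 < a) (hδ : 0 ≤ δ) (hab : a + δ ≤ b)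
    (hbR : b ≤ R) : δ / R ^ 2 ≤ a⁻¹ - b⁻¹ := by
  have hb : 0 < b := by linarith
  calc δ / R ^ 2 ≤ δ / (a * b) :=
        div_le_div_of_nonneg_left hδ (by positivity) (by nlinarith)
    _ ≤ (b - a) / (a * b) := by gcongr; linarith
    _ = a⁻¹ - b⁻¹ := by field_simp

lemma exp_mul_exp_two_mul_div_le {k δ R a b : ℝ} (hk : 0 ≤ k) (ha : 0 < a) (hδ : 0 ≤ δ)
    (hab : a + δ ≤ b) (hbR : b ≤ R) :
    exp (2 * k * δ / R ^ 2) * exp (2 * k / b) ≤ exp (2 * k / a) := by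
  rw [← exp_add, exp_le_exp]
  calc 2 * k * δ / R ^ 2 + 2 * k / b = 2 * k * (δ / R ^ 2) + 2 * k * b⁻¹ := by ring
    _ ≤ 2 * k * (a⁻¹ - b⁻¹) + 2 * k * b⁻¹ := by
        gcongr; exact div_sq_le_inv_sub_inv ha hδ hab hbR
    _ = 2 * k / a := by ring

lemma closedBall_subset_ball_diff_ball {X : Type*} [PseudoMetricSpace X] {y z : X}
    {r s R : ℝ} (hr : s + r ≤ dist z y) (hR : s + dist z y < R) :
    closedBall z s ⊆ ball y R \ ball y r :=
  fun _ hx => ⟨closedBall_subset_ball' hR hx,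
    Set.disjoint_left.1 (closedBall_disjoint_ball hr) hx⟩

section Geometry

variable {E : Type*} [NormedAddCommGroup E]

lemma norm_sub_lt_norm_of_mem_ball {x y : E} {r : ℝ} (hx : x ∈ ball y r) : ‖y‖ - r < ‖x‖ := by
  linarith [norm_lt_of_mem_ball (mem_ball_comm.1 hx)]

lemma norm_sub_le_norm_of_mem_closedBall {x y : E} {r : ℝ} (hx : x ∈ closedBall y r) :
    ‖y‖ - r ≤ ‖x‖ := by
  linarith [norm_le_of_mem_closedBall (mem_closedBall_comm.1 hx)]

lemma exists_norm_sub_eq_and_norm_eq_sub [NormedSpace ℝ E] (y : E) {r : ℝ} (hr : 0 ≤ r)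
    (hry : r ≤ ‖y‖) : ∃ z : E, ‖z - y‖ = r ∧ ‖z‖ = ‖y‖ - r := by
  rcases hr.eq_or_lt with rfl | hr
  · exact ⟨y, by simp⟩
  have hy : 0 < ‖y‖ := hr.trans_le hry
  have hc : 0 ≤ 1 - r / ‖y‖ := by rw [sub_nonneg, div_le_one hy]; exact hry
  refine ⟨(1 - r / ‖y‖) • y, ?_, ?_⟩
  · rw [show (1 - r / ‖y‖) • y - y = -(r / ‖y‖) • y by module, norm_smul, norm_neg,
      Real.norm_of_nonneg (by positivity)]
    field_simp
  · rw [norm_smul, Real.norm_of_nonneg hc]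
    field_simp

lemma exp_div_norm_le_of_mem_ball {x y : E} {c r : ℝ} (hc : 0 ≤ c) (hr : r < ‖y‖)
    (hx : x ∈ ball y r) : exp (c / ‖x‖) ≤ exp (c / (‖y‖ - r)) :=
  exp_le_exp.2 (div_le_div_of_nonneg_left hc (by linarith) (norm_sub_lt_norm_of_mem_ball hx).le)

lemma exists_closedBall_subset_annulus_exp_gain [NormedSpace ℝ E] {y : E} {ρ k R : ℝ}
    (hρ : 0 < ρ) (hk : 0 ≤ k) (hy : 4 * ρ < ‖y‖) (hyR : ‖y‖ - 3 * ρ ≤ R) :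
    ∃ z : E, closedBall z (ρ / 4) ⊆ ball y (4 * ρ) \ ball y (3 * ρ) ∧
      ∀ x ∈ closedBall z (ρ / 4),
        exp (1 / (2 * R ^ 2) * k * ρ) * exp (2 * k / (‖y‖ - 3 * ρ)) ≤ exp (2 * k / ‖x‖) := by
  obtain ⟨z, hzy, hz⟩ := exists_norm_sub_eq_and_norm_eq_sub y (r := 7 / 2 * ρ) (by positivity)
    (by linarith)
  refine ⟨z, closedBall_subset_ball_diff_ball (by rw [dist_eq_norm, hzy]; linarith)
    (by rw [dist_eq_norm, hzy]; linarith), fun x hx => ?_⟩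
  have h_lo := norm_sub_le_norm_of_mem_closedBall hx
  have h_hi := norm_le_of_mem_closedBall hx
  convert exp_mul_exp_two_mul_div_le hk (by linarith) (by positivity : 0 ≤ ρ / 4)
    (by linarith : ‖x‖ + ρ / 4 ≤ ‖y‖ - 3 * ρ) hyR using 3
  ring

end Geometry

lemma setIntegral_le_mul_setIntegral_of_le_of_mul_le {X : Type*} [MeasurableSpace X]
    {μ : Measure X} {s t : Set X} {f : X → ℝ} {M c C : ℝ} (hM : 0 ≤ M) (hc : 0 < c)
    (hC : 0 ≤ C) (hs : MeasurableSet s) (hsμ : μ s ≠ ⊤) (ht : MeasurableSet t) (htμ : μ t ≠ ⊤)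
    (hft : IntegrableOn f t μ) (hfs : ∀ x ∈ s, f x ≤ M) (hMt : ∀ x ∈ t, c * M ≤ f x)
    (hvol : μ.real s ≤ C * μ.real t) :
    ∫ x in s, f x ∂μ ≤ C * c⁻¹ * ∫ x in t, f x ∂μ := by
  have hint_s : ∫ x in s, f x ∂μ ≤ M * μ.real s := by
    by_cases hfs' : IntegrableOn f s μ
    · simpa [setIntegral_const, mul_comm] using
        setIntegral_mono_on hfs' (integrableOn_const hsμ) hs hfs
    · rw [integral_undef hfs']; positivity
  calc ∫ x in s, f x ∂μ ≤ M * μ.real s := hint_s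
    _ ≤ M * (C * μ.real t) := by gcongr
    _ = C * c⁻¹ * (c * M * μ.real t) := by field_simp
    _ ≤ C * c⁻¹ * ∫ x in t, f x ∂μ := by
        gcongr; exact setIntegral_ge_of_const_le_real ht htμ hMt hft

lemma addHaar_real_ball_mul_eq {E : Type*} [NormedAddCommGroup E] [NormedSpace ℝ E]
    [MeasurableSpace E] [BorelSpace E] [FiniteDimensional ℝ E] [Nontrivial E] (μ : Measure E)
    [μ.IsAddHaarMeasure] (x z : E) {a r : ℝ} (ha : 0 ≤ a) (hr : 0 ≤ r) :
    μ.real (ball x (a * r)) = a ^ Module.finrank ℝ E * μ.real (closedBall z r) := by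
  rw [← Measure.addHaar_real_closedBall_eq_addHaar_real_ball,
    Measure.addHaar_real_closedBall μ x (by positivity), Measure.addHaar_real_closedBall μ z hr,
    mul_pow, mul_assoc]

lemma integrableOn_exp_div_norm_closedBall {E : Type*} [NormedAddCommGroup E] [ProperSpace E]
    [MeasurableSpace E] [OpensMeasurableSpace E] {μ : Measure E} [IsFiniteMeasureOnCompacts μ]
    (c : ℝ) {y : E} {r : ℝ} (hr : r < ‖y‖) :
    IntegrableOn (fun x => exp (c / ‖x‖)) (closedBall y r) μ := by
  refine ContinuousOn.integrableOn_compact (isCompact_closedBall y r) ?_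
  refine continuous_exp.comp_continuousOn (continuousOn_const.div continuous_norm.continuousOn ?_)
  intro x hx
  linarith [norm_sub_le_norm_of_mem_closedBall hx]

/-- Weight comparison for the radial Carleman weight `e^{2k/|x|}` around a small hole
`D = B(y,ρ)` with `5D ⊆ B(0,R₀) \ B(0,R̃)`. -/
theorem stmt8 (Rt R₀ : ℝ) (hRt : 0 < Rt) (hRtR₀ : Rt < R₀) :
    ∃ Ct > (0 : ℝ), ∃ C > (0 : ℝ), ∀ ρ : ℝ, 0 < ρ → ρ < Rt / 100 →
      ∀ y : E2, ball y (5 * ρ) ⊆ ball (0 : E2) R₀ \ ball (0 : E2) Rt →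
      ∀ k : ℝ, 0 < k →
        (∃ z : E2, closedBall z (ρ / 4) ⊆ ball y (4 * ρ) \ ball y (3 * ρ) ∧
          ∀ x ∈ closedBall z (ρ / 4), ∀ x' ∈ ball y (3 * ρ) \ ball y (2 * ρ),
            Real.exp (Ct * k * ρ) * Real.exp (2 * k / ‖x'‖) ≤ Real.exp (2 * k / ‖x‖)) ∧
        ∫ x in ball y (3 * ρ) \ ball y (2 * ρ), Real.exp (2 * k / ‖x‖) ≤
          C * Real.exp (-(Ct * k * ρ)) *
            ∫ x in ball y (4 * ρ) \ ball y (3 * ρ), Real.exp (2 * k / ‖x‖) := by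
  have hR₀ : 0 < R₀ := hRt.trans hRtR₀
  refine ⟨1 / (2 * R₀ ^ 2), by positivity, 144, by norm_num, fun ρ hρ hρRt y h5 k hk => ?_⟩
  have hy := h5 (mem_ball_self (by positivity))
  have hyR₀ : ‖y‖ < R₀ := mem_ball_zero_iff.1 hy.1
  have hyRt : Rt ≤ ‖y‖ := by simpa using hy.2
  obtain ⟨z, hsub, hgain⟩ := exists_closedBall_subset_annulus_exp_gain (R := R₀) hρ hk.le
    (by linarith) (by linarith)
  have hsup : ∀ x ∈ ball y (3 * ρ), exp (2 * k / ‖x‖) ≤ exp (2 * k / (‖y‖ - 3 * ρ)) :=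
    fun x => exp_div_norm_le_of_mem_ball (by positivity) (by linarith)
  refine ⟨⟨z, hsub, fun x hx x' hx' =>
    (mul_le_mul_of_nonneg_left (hsup x' hx'.1) (exp_pos _).le).trans (hgain x hx)⟩, ?_⟩
  have hint : IntegrableOn (fun x => exp (2 * k / ‖x‖)) (closedBall y (4 * ρ)) :=
    integrableOn_exp_div_norm_closedBall _ (by linarith)
  have hvol : volume.real (ball y (3 * ρ) \ ball y (2 * ρ)) ≤
      144 * volume.real (closedBall z (ρ / 4)) :=
    calc _ ≤ volume.real (ball y (3 * ρ)) := measureReal_mono Set.sdiff_subset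
      _ = _ := by
        rw [show 3 * ρ = 12 * (ρ / 4) by ring, addHaar_real_ball_mul_eq _ y z (by norm_num)
          (by positivity), finrank_euclideanSpace_fin]
        norm_num
  calc _ ≤ 144 * exp (-(1 / (2 * R₀ ^ 2) * k * ρ)) *
        ∫ x in closedBall z (ρ / 4), exp (2 * k / ‖x‖) := by
        rw [exp_neg]
        exact setIntegral_le_mul_setIntegral_of_le_of_mul_le (exp_pos _).le (exp_pos _)
          (by norm_num) (measurableSet_ball.diff measurableSet_ball)
          (measure_ne_top_of_subset Set.sdiff_subset measure_ball_lt_top.ne)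
          measurableSet_closedBall measure_closedBall_lt_top.ne
          (hint.mono_set (hsub.trans (Set.sdiff_subset.trans ball_subset_closedBall)))
          (fun x hx => hsup x hx.1) hgain hvol
    _ ≤ _ := mul_le_mul_of_nonneg_left
        (setIntegral_mono_set (hint.mono_set (Set.sdiff_subset.trans ball_subset_closedBall))
          (.of_forall fun _ => (exp_pos _).le) hsub.eventuallyLE) (by positivity)
end
end
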